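/- arXiv:math/0503208 — 8 statements merged into one kernel-verified Lean document; each statement's English description precedes it below -/
import Mathlib

section
/- Let $r,t>0$ and let $a,\nu>0$. Then $\int_{|t-r|}^{t+r} \frac{(1+y)^{-a-\nu}}{(r-t+y)^{1-a}}\,dy \leq C(a,\nu)\, r^a (1+t+r)^{-a}(1+|t-r|)^{-\nu}$ for some constant $C(a,\nu)$ depending only on $a$ and $\nu$. -/
/-!
Substituting `u = r - t + y`, the weight `w u = 1 + y` is bounded below both by
`B = 1 + |t - r|` and, on the whole range of integration, by `u / L` with
`L = 4 r / (1 + t + r)`. Below `u = L B` the first bound leaves `B^{-(a+ν)} ∫ u^{a-1}`,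
which is `L^a B^{-ν} / a`; above it the second leaves `L^{a+ν} ∫ u^{-1-ν}`, which is
`L^a B^{-ν} / ν`. Hence the integral is at most `(1/a + 1/ν) L^a B^{-ν}`.
-/

open MeasureTheory Real Set intervalIntegral

section WeightedPowerIntegral

variable {w : ℝ → ℝ} {a e ν B L p c q : ℝ}

theorem intervalIntegrable_rpow_neg_mul_rpow (hw : Continuous w) (ha : 0 < a) (hpq : p ≤ q)
    (hw₀ : ∀ u ∈ Icc p q, 0 < w u) :
    IntervalIntegrable (fun u => w u ^ (-e) * u ^ (a - 1)) volume p q := by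
  have hcont : ContinuousOn (fun u => w u ^ (-e)) (uIcc p q) := by
    rw [uIcc_of_le hpq]
    exact hw.continuousOn.rpow_const fun u hu => Or.inl (hw₀ u hu).ne'
  exact (intervalIntegrable_rpow' (by linarith)).continuousOn_mul hcont

theorem integral_rpow_neg_mul_rpow_le_of_le_weight (hw : Continuous w) (ha : 0 < a) (he : 0 ≤ e)
    (hB : 0 < B) (hp : 0 ≤ p) (hpc : p ≤ c) (hwB : ∀ u ∈ Icc p c, B ≤ w u) :
    ∫ u in p..c, w u ^ (-e) * u ^ (a - 1) ≤ B ^ (-e) * ((c ^ a - p ^ a) / a) := by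
  have hmaj : IntervalIntegrable (fun u => B ^ (-e) * u ^ (a - 1)) volume p c :=
    (intervalIntegrable_rpow' (by linarith)).const_mul _
  have hle : ∀ u ∈ Icc p c, w u ^ (-e) * u ^ (a - 1) ≤ B ^ (-e) * u ^ (a - 1) := fun u hu =>
    mul_le_mul_of_nonneg_right (rpow_le_rpow_of_nonpos hB (hwB u hu) (neg_nonpos.2 he))
      (rpow_nonneg (hp.trans hu.1) _)
  calc ∫ u in p..c, w u ^ (-e) * u ^ (a - 1) ≤ ∫ u in p..c, B ^ (-e) * u ^ (a - 1) :=
        integral_mono_on hpc (intervalIntegrable_rpow_neg_mul_rpow hw ha hpc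
          fun u hu => hB.trans_le (hwB u hu)) hmaj hle
    _ = B ^ (-e) * ((c ^ a - p ^ a) / a) := by
        rw [intervalIntegral.integral_const_mul, integral_rpow (Or.inl (by linarith)),
          sub_add_cancel]

theorem integral_rpow_neg_mul_rpow_le_of_le_mul_weight (hw : Continuous w) (ha : 0 < a)
    (hν : 0 < ν) (hL : 0 < L) (hc : 0 < c) (hcq : c ≤ q) (hwL : ∀ u ∈ Icc c q, u ≤ L * w u) :
    ∫ u in c..q, w u ^ (-(a + ν)) * u ^ (a - 1) ≤ L ^ (a + ν) * (c ^ (-ν) / ν) := by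
  have hw₀ : ∀ u ∈ Icc c q, 0 < w u := fun u hu =>
    pos_of_mul_pos_right (hc.trans_le (hu.1.trans (hwL u hu))) hL.le
  have h0 : (0 : ℝ) ∉ uIcc c q := by rw [uIcc_of_le hcq]; exact fun h => hc.not_ge h.1
  have hmaj : IntervalIntegrable (fun u => L ^ (a + ν) * u ^ (-1 - ν)) volume c q :=
    (intervalIntegrable_rpow (Or.inr h0)).const_mul _
  have hle : ∀ u ∈ Icc c q,
      w u ^ (-(a + ν)) * u ^ (a - 1) ≤ L ^ (a + ν) * u ^ (-1 - ν) := by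
    intro u hu
    have hu₀ : 0 < u := hc.trans_le hu.1
    calc w u ^ (-(a + ν)) * u ^ (a - 1) ≤ (u / L) ^ (-(a + ν)) * u ^ (a - 1) := by
          refine mul_le_mul_of_nonneg_right ?_ (rpow_nonneg hu₀.le _)
          exact rpow_le_rpow_of_nonpos (by positivity) ((div_le_iff₀' hL).2 (hwL u hu))
            (by linarith)
      _ = L ^ (a + ν) * u ^ (-1 - ν) := by
          rw [div_rpow hu₀.le hL.le, rpow_neg hL.le, div_inv_eq_mul, mul_comm (u ^ _),
            mul_assoc, ← rpow_add hu₀]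
          ring_nf
  calc ∫ u in c..q, w u ^ (-(a + ν)) * u ^ (a - 1) ≤ ∫ u in c..q, L ^ (a + ν) * u ^ (-1 - ν) :=
        integral_mono_on hcq (intervalIntegrable_rpow_neg_mul_rpow hw ha hcq hw₀) hmaj hle
    _ ≤ L ^ (a + ν) * (c ^ (-ν) / ν) := by
        have hne : (-1 - ν : ℝ) ≠ -1 := by linarith
        rw [intervalIntegral.integral_const_mul, integral_rpow (Or.inr ⟨hne, h0⟩),
          show -1 - ν + 1 = -ν by ring, div_neg, ← neg_div, neg_sub]
        gcongr
        linarith [rpow_nonneg (hc.le.trans hcq) (-ν)]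

theorem integral_rpow_neg_div_rpow_le (hw : Continuous w) (ha : 0 < a) (hν : 0 < ν)
    (hB : 0 < B) (hL : 0 < L) (hp : 0 ≤ p) (hpq : p ≤ q) (hwB : ∀ u ∈ Icc p q, B ≤ w u)
    (hwL : ∀ u ∈ Icc p q, u ≤ L * w u) :
    ∫ u in p..q, w u ^ (-(a + ν)) / u ^ (1 - a) ≤ (1 / a + 1 / ν) * L ^ a * B ^ (-ν) := by
  -- `L * B` is where the two lower bounds `B` and `u / L` on `w u` cross.
  set m := max p (L * B)
  have hm : 0 < m := lt_max_of_lt_right (by positivity)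
  have head : ∀ c, p ≤ c → c ≤ m → c ≤ q →
      ∫ u in p..c, w u ^ (-(a + ν)) * u ^ (a - 1) ≤ L ^ a * B ^ (-ν) / a := by
    intro c hpc hcm hcq
    have hca : c ^ a - p ^ a ≤ (L * B) ^ a := by
      rcases le_total p (L * B) with hpLB | hLBp
      · have := rpow_le_rpow (hp.trans hpc) (hcm.trans_eq (max_eq_right hpLB)) ha.le
        linarith [rpow_nonneg hp a]
      · have := rpow_le_rpow (hp.trans hpc) (hcm.trans_eq (max_eq_left hLBp)) ha.le
        linarith [rpow_nonneg (by positivity : 0 ≤ L * B) a]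
    calc ∫ u in p..c, w u ^ (-(a + ν)) * u ^ (a - 1)
        ≤ B ^ (-(a + ν)) * ((c ^ a - p ^ a) / a) :=
          integral_rpow_neg_mul_rpow_le_of_le_weight hw ha (by positivity) hB hp hpc
            fun u hu => hwB u ⟨hu.1, hu.2.trans hcq⟩
      _ ≤ B ^ (-(a + ν)) * ((L * B) ^ a / a) := by gcongr
      _ = L ^ a * B ^ (-ν) / a := by
          rw [mul_rpow hL.le hB.le, ← mul_div_assoc, mul_left_comm, ← rpow_add hB]
          ring_nf
  have hform : ∫ u in p..q, w u ^ (-(a + ν)) / u ^ (1 - a)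
      = ∫ u in p..q, w u ^ (-(a + ν)) * u ^ (a - 1) := by
    refine integral_congr fun u hu => ?_
    rw [uIcc_of_le hpq] at hu
    simp only [div_eq_mul_inv, ← rpow_neg (hp.trans hu.1), neg_sub]
  suffices ∫ u in p..q, w u ^ (-(a + ν)) * u ^ (a - 1)
      ≤ L ^ a * B ^ (-ν) / a + L ^ a * B ^ (-ν) / ν by
    rw [hform]; exact this.trans_eq (by ring)
  rcases le_total q m with hqm | hmq
  · exact (head q hpq hqm le_rfl).trans (le_add_of_nonneg_right (by positivity))
  · have hpm : p ≤ m := le_max_left _ _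
    have hint : ∀ c d, p ≤ c → c ≤ d → d ≤ q →
        IntervalIntegrable (fun u => w u ^ (-(a + ν)) * u ^ (a - 1)) volume c d :=
      fun c d hpc hcd hdq => intervalIntegrable_rpow_neg_mul_rpow hw ha hcd
        fun u hu => hB.trans_le (hwB u ⟨hpc.trans hu.1, hu.2.trans hdq⟩)
    rw [← integral_add_adjacent_intervals (hint p m le_rfl hpm hmq) (hint m q hpm hmq le_rfl)]
    have tail : ∫ u in m..q, w u ^ (-(a + ν)) * u ^ (a - 1) ≤ L ^ a * B ^ (-ν) / ν := by
      calc ∫ u in m..q, w u ^ (-(a + ν)) * u ^ (a - 1) ≤ L ^ (a + ν) * (m ^ (-ν) / ν) :=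
            integral_rpow_neg_mul_rpow_le_of_le_mul_weight hw ha hν hL hm hmq
              fun u hu => hwL u ⟨hpm.trans hu.1, hu.2⟩
        _ ≤ L ^ (a + ν) * ((L * B) ^ (-ν) / ν) := by
            refine mul_le_mul_of_nonneg_left (div_le_div_of_nonneg_right ?_ hν.le) (by positivity)
            exact rpow_le_rpow_of_nonpos (by positivity) (le_max_right _ _) (by linarith)
        _ = L ^ a * B ^ (-ν) / ν := by
            rw [mul_rpow hL.le hB.le, ← mul_div_assoc, ← mul_assoc, ← rpow_add hL]
            ring_nf
    exact add_le_add (head m hpm le_rfl hmq) tail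

end WeightedPowerIntegral

theorem mul_le_four_mul_one_add_add {r t u : ℝ}
    (hu : u ∈ Icc (|t - r| - (t - r)) (2 * r)) :
    (1 + t + r) * u ≤ 4 * r * (1 + (u + (t - r))) := by
  obtain ⟨hu₁, hu₂⟩ := hu
  rcases abs_cases (t - r) with ⟨h, _⟩ | ⟨h, _⟩ <;> rw [h] at hu₁ <;> nlinarith

theorem stmt_0 (a ν : ℝ) (ha : 0 < a) (hν : 0 < ν) :
    ∃ C : ℝ, 0 < C ∧ ∀ r t : ℝ, 0 < r → 0 < t →
      (∫ y in (|t - r|)..(t + r), (1 + y) ^ (-(a + ν)) / (r - t + y) ^ (1 - a)) ≤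
        C * r ^ a * (1 + t + r) ^ (-a) * (1 + |t - r|) ^ (-ν) := by
  refine ⟨4 ^ a * (1 / a + 1 / ν), by positivity, fun r t hr ht => ?_⟩
  have hS : 0 < 1 + t + r := by linarith
  have hdist : |t - r| ≤ t + r := abs_le.2 ⟨by linarith, by linarith⟩
  have hshift : ∫ y in (|t - r|)..(t + r), (1 + y) ^ (-(a + ν)) / (r - t + y) ^ (1 - a)
      = ∫ u in (|t - r| - (t - r))..(2 * r), (1 + (u + (t - r))) ^ (-(a + ν)) / u ^ (1 - a) := by
    rw [show 2 * r = t + r - (t - r) by ring, ← integral_comp_sub_right]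
    congr 1
    ext y
    ring_nf
  have hbound := integral_rpow_neg_div_rpow_le (w := fun u => 1 + (u + (t - r)))
    (B := 1 + |t - r|) (L := 4 * r / (1 + t + r)) (q := 2 * r) (by fun_prop) ha hν
    (by positivity) (by positivity) (sub_nonneg.2 (le_abs_self _)) (by linarith)
    (fun u hu => by linarith [hu.1])
    (fun u hu => by
      rw [div_mul_eq_mul_div, le_div_iff₀ hS, mul_comm]
      exact mul_le_four_mul_one_add_add hu)
  rw [hshift]
  refine hbound.trans_eq ?_
  rw [div_rpow (by positivity) hS.le, mul_rpow (by norm_num) hr.le, rpow_neg hS.le]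
  ring
end

section
/- Let $m\geq 0$, $a>0$, $p>1$, and $\nu>0$ satisfy $2 - mp + m > 0$, $2-mp+m < ap$, and $2-mp+m-ap \leq \nu p - \nu - a$. Then for any $y\in\mathbb{R}$ and any $z\geq |y|$, $\int_z^\infty (x+y)^{1-mp+m}(1+x)^{-ap}\,dx \leq C(a,m,p)\,(1+z)^{\nu p-\nu-a}$. -/
/-!
Write `α = 1 - mp + m` and `β = ap`, so that `-1 < α` and `α + 1 < β`. For `z < x ≤ 1 + 2z` we
have `x - z ≤ x + y ≤ 2(1 + x)`, so the integrand is at most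
`(1 + z)^(-β) (x - z)^α + 2^|α| (1 + x)^(α - β)`; for `x > 1 + 2z` the base `x + y` lies between
`(1 + x)/2` and `2(1 + x)`, so the second term alone suffices. Both majorants integrate to
multiples of `(1 + z)^(α + 1 - β)`, and `α + 1 - β ≤ νp - ν - a` while `1 + z ≥ 1`.
-/

open MeasureTheory Real Set Filter Topology

lemma integral_Ioi_one_add_rpow {s z : ℝ} (hs : s < -1) (hz : -1 < z) :
    IntegrableOn (fun x => (1 + x) ^ s) (Ioi z) ∧
      ∫ x in Ioi z, (1 + x) ^ s = (1 + z) ^ (s + 1) / -(s + 1) := by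
  have hderiv :
      ∀ x ∈ Ici z, HasDerivAt (fun x => (1 + x) ^ (s + 1) / (s + 1)) ((1 + x) ^ s) x := by
    intro x hx
    have hx0 : 0 < 1 + x := by linarith [hx.out]
    refine ((((hasDerivAt_id x).const_add 1).rpow_const (Or.inl hx0.ne')).div_const
      (s + 1)).congr_deriv ?_
    rw [id, add_sub_cancel_right]
    field_simp [show s + 1 ≠ 0 by linarith]
  have hnonneg : ∀ x ∈ Ioi z, 0 ≤ (1 + x) ^ s := fun x hx => rpow_nonneg (by linarith [hx.out]) _
  have hlim : Tendsto (fun x => (1 + x) ^ (s + 1) / (s + 1)) atTop (𝓝 (0 / (s + 1))) :=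
    (((tendsto_rpow_neg_atTop (by linarith : 0 < -(s + 1))).comp
      (tendsto_atTop_add_const_left _ 1 tendsto_id)).div_const _).congr fun x => by simp
  refine ⟨integrableOn_Ioi_deriv_of_nonneg' hderiv hnonneg hlim, ?_⟩
  rw [integral_Ioi_of_hasDerivAt_of_nonneg' hderiv hnonneg hlim, zero_div, zero_sub, div_neg]

lemma integral_Ioc_sub_rpow {r z L : ℝ} (hr : -1 < r) (hL : 0 ≤ L) :
    IntegrableOn (fun x => (x - z) ^ r) (Ioc z (z + L)) ∧
      ∫ x in Ioc z (z + L), (x - z) ^ r = L ^ (r + 1) / (r + 1) := by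
  have hint : IntervalIntegrable (fun x => (x - z) ^ r) volume z (z + L) := by
    simpa [add_comm] using
      (intervalIntegral.intervalIntegrable_rpow' (a := 0) (b := L) hr).comp_sub_right z
  refine ⟨hint.1, ?_⟩
  rw [← intervalIntegral.integral_of_le (by linarith),
    intervalIntegral.integral_comp_sub_right (fun t => t ^ r), sub_self, add_sub_cancel_left,
    integral_rpow (Or.inl hr), zero_rpow (by linarith), sub_zero]

lemma rpow_le_two_rpow_abs_mul_rpow {α t c : ℝ} (hα : 0 ≤ α) (ht : 0 ≤ t) (htc : t ≤ 2 * c) :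
    t ^ α ≤ 2 ^ |α| * c ^ α := by
  rw [abs_of_nonneg hα, ← mul_rpow zero_le_two (by linarith)]
  exact rpow_le_rpow ht htc hα

lemma rpow_le_two_rpow_abs_mul_rpow_of_half_le {α t c : ℝ} (hc : 0 < c) (hct : c / 2 ≤ t)
    (htc : t ≤ 2 * c) : t ^ α ≤ 2 ^ |α| * c ^ α := by
  rcases le_or_gt 0 α with hα | hα
  · exact rpow_le_two_rpow_abs_mul_rpow hα (by linarith) htc
  · calc t ^ α ≤ (c / 2) ^ α := rpow_le_rpow_of_nonpos (by positivity) hct hα.le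
      _ = 2 ^ |α| * c ^ α := by
        rw [div_rpow hc.le zero_le_two, abs_of_neg hα, rpow_neg zero_le_two, div_eq_inv_mul]

lemma rpow_le_rpow_add_two_rpow_abs_mul_rpow {α s t c : ℝ} (hs : 0 < s) (hst : s ≤ t)
    (htc : t ≤ 2 * c) : t ^ α ≤ s ^ α + 2 ^ |α| * c ^ α := by
  rcases le_or_gt 0 α with hα | hα
  · exact le_add_of_nonneg_of_le (rpow_nonneg hs.le _)
      (rpow_le_two_rpow_abs_mul_rpow hα (by linarith) htc)
  · refine le_add_of_le_of_nonneg (rpow_le_rpow_of_nonpos hs hst hα.le) ?_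
    exact mul_nonneg (rpow_nonneg zero_le_two _) (rpow_nonneg (by linarith) _)

lemma add_rpow_mul_one_add_rpow_neg_le {α β x y z : ℝ} (hβ : 0 ≤ β) (hyz : |y| ≤ z)
    (hzx : z < x) :
    (x + y) ^ α * (1 + x) ^ (-β) ≤
      (Ioc z (z + (1 + z))).indicator (fun x => (1 + z) ^ (-β) * (x - z) ^ α) x +
        2 ^ |α| * (1 + x) ^ (α - β) := by
  have hy := abs_le.mp hyz
  have hx : 0 < 1 + x := by linarith [abs_nonneg y]
  have hdecay : (1 + x) ^ α * (1 + x) ^ (-β) = (1 + x) ^ (α - β) := by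
    rw [← rpow_add hx, sub_eq_add_neg]
  by_cases hnear : x ≤ z + (1 + z)
  · rw [indicator_of_mem (show x ∈ Ioc z _ from ⟨hzx, hnear⟩)]
    have hβz : (1 + x) ^ (-β) ≤ (1 + z) ^ (-β) :=
      rpow_le_rpow_of_nonpos (by linarith) (by linarith) (neg_nonpos.mpr hβ)
    have hsplit := rpow_le_rpow_add_two_rpow_abs_mul_rpow (α := α) (c := 1 + x)
      (sub_pos.mpr hzx) (show x - z ≤ x + y by linarith) (by linarith)
    calc (x + y) ^ α * (1 + x) ^ (-β)
        ≤ ((x - z) ^ α + 2 ^ |α| * (1 + x) ^ α) * (1 + x) ^ (-β) :=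
          mul_le_mul_of_nonneg_right hsplit (rpow_nonneg hx.le _)
      _ ≤ (x - z) ^ α * (1 + z) ^ (-β) + 2 ^ |α| * ((1 + x) ^ α * (1 + x) ^ (-β)) := by
          rw [add_mul, mul_assoc]
          gcongr
      _ = _ := by rw [hdecay, mul_comm]
  · rw [indicator_of_notMem (fun h => hnear h.2), zero_add, ← hdecay, ← mul_assoc]
    exact mul_le_mul_of_nonneg_right
      (rpow_le_two_rpow_abs_mul_rpow_of_half_le hx (by linarith) (by linarith))
      (rpow_nonneg hx.le _)

theorem integral_Ioi_add_rpow_mul_one_add_rpow_neg_le {α β y z : ℝ} (hα : -1 < α)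
    (hαβ : α + 1 < β) (hyz : |y| ≤ z) :
    ∫ x in Ioi z, (x + y) ^ α * (1 + x) ^ (-β) ≤
      (1 / (α + 1) + 2 ^ |α| / (β - α - 1)) * (1 + z) ^ (α + 1 - β) := by
  have hz : 0 ≤ z := (abs_nonneg y).trans hyz
  set g₁ : ℝ → ℝ := (Ioc z (z + (1 + z))).indicator fun x => (1 + z) ^ (-β) * (x - z) ^ α
  set g₂ : ℝ → ℝ := fun x => 2 ^ |α| * (1 + x) ^ (α - β)
  obtain ⟨hint₁, hval₁⟩ := integral_Ioc_sub_rpow (z := z) hα (by linarith : 0 ≤ 1 + z)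
  obtain ⟨hint₂, hval₂⟩ :=
    integral_Ioi_one_add_rpow (z := z) (by linarith : α - β < -1) (by linarith)
  have hg₁ : Integrable g₁ (volume.restrict (Ioi z)) :=
    ((integrable_indicator_iff measurableSet_Ioc).mpr (hint₁.const_mul _)).integrableOn
  have hg₂ : Integrable g₂ (volume.restrict (Ioi z)) := hint₂.const_mul _
  have hmono : ∫ x in Ioi z, (x + y) ^ α * (1 + x) ^ (-β) ≤ ∫ x in Ioi z, g₁ x + g₂ x := by
    refine integral_mono_of_nonneg ?_ (hg₁.add hg₂) ?_
    all_goals refine ae_restrict_of_forall_mem measurableSet_Ioi fun x (hx : z < x) => ?_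
    · have := neg_abs_le y
      exact mul_nonneg (rpow_nonneg (by linarith) _) (rpow_nonneg (by linarith) _)
    · exact add_rpow_mul_one_add_rpow_neg_le (by linarith) hyz hx
  have hnear : ∫ x in Ioi z, g₁ x = (1 + z) ^ (-β) * ((1 + z) ^ (α + 1) / (α + 1)) := by
    rw [integral_indicator measurableSet_Ioc, Measure.restrict_restrict measurableSet_Ioc,
      inter_eq_left.mpr Ioc_subset_Ioi_self, integral_const_mul, hval₁]
  have hfar : ∫ x in Ioi z, g₂ x = 2 ^ |α| * ((1 + z) ^ (α - β + 1) / -(α - β + 1)) := by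
    rw [integral_const_mul, hval₂]
  have h1z : 0 < 1 + z := by linarith
  calc ∫ x in Ioi z, (x + y) ^ α * (1 + x) ^ (-β)
      ≤ ∫ x in Ioi z, g₁ x + g₂ x := hmono
    _ = (1 + z) ^ (-β) * ((1 + z) ^ (α + 1) / (α + 1)) +
          2 ^ |α| * ((1 + z) ^ (α - β + 1) / -(α - β + 1)) := by
        rw [integral_add hg₁ hg₂, hnear, hfar]
    _ = _ := by
        have hexp : (1 + z) ^ (-β) * (1 + z) ^ (α + 1) = (1 + z) ^ (α + 1 - β) := by
          rw [← rpow_add h1z, neg_add_eq_sub]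
        rw [mul_div_assoc', hexp, show α - β + 1 = α + 1 - β by ring,
          show -(α + 1 - β) = β - α - 1 by ring]
        ring

theorem stmt_3_general (m a p ν : ℝ)
    (h1 : 0 < 2 - m * p + m) (h2 : 2 - m * p + m < a * p)
    (h3 : 2 - m * p + m - a * p ≤ ν * p - ν - a) :
    ∃ C : ℝ, 0 < C ∧ ∀ y z : ℝ, |y| ≤ z →
      (∫ x in Set.Ioi z, (x + y) ^ (1 - m * p + m) * (1 + x) ^ (-(a * p))) ≤
        C * (1 + z) ^ (ν * p - ν - a) := by
  have hα : -1 < 1 - m * p + m := by linarith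
  have hαβ : 1 - m * p + m + 1 < a * p := by linarith
  have hC :
      0 < 1 / (1 - m * p + m + 1) + 2 ^ |1 - m * p + m| / (a * p - (1 - m * p + m) - 1) := by
    have : 0 < a * p - (1 - m * p + m) - 1 := by linarith
    have : 0 < 1 - m * p + m + 1 := by linarith
    positivity
  refine ⟨_, hC, fun y z hyz => ?_⟩
  have h1z : 1 ≤ 1 + z := by linarith [(abs_nonneg y).trans hyz]
  refine (integral_Ioi_add_rpow_mul_one_add_rpow_neg_le hα hαβ hyz).trans ?_
  exact mul_le_mul_of_nonneg_left (rpow_le_rpow_of_exponent_le h1z (by linarith)) hC.le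

theorem stmt_3 (m a p ν : ℝ) (hm : 0 ≤ m) (ha : 0 < a) (hp : 1 < p) (hν : 0 < ν)
    (h1 : 0 < 2 - m * p + m) (h2 : 2 - m * p + m < a * p)
    (h3 : 2 - m * p + m - a * p ≤ ν * p - ν - a) :
    ∃ C : ℝ, 0 < C ∧ ∀ y z : ℝ, |y| ≤ z →
      (∫ x in Set.Ioi z, (x + y) ^ (1 - m * p + m) * (1 + x) ^ (-(a * p))) ≤
        C * (1 + z) ^ (ν * p - ν - a) :=
  stmt_3_general m a p ν h1 h2 h3
end

section
/- Let $w\leq 0$ and $a,\nu>0$. Then $\int_{-\infty}^w \frac{(1+|y|)^{-a-\nu}}{(w-y)^{1-a}}\,dy \leq C(a,\nu)\,(1+|w|)^{-\nu}$. -/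
open MeasureTheory Real

theorem stmt_6 (a ν : ℝ) (ha : 0 < a) (hν : 0 < ν) :
    ∃ C : ℝ, 0 < C ∧ ∀ w : ℝ, w ≤ 0 →
      (∫ y in Set.Iic w, (1 + |y|) ^ (-(a + ν)) / (w - y) ^ (1 - a)) ≤
        C * (1 + |w|) ^ (-ν) := by
  set J : ℝ := ∫ u in Set.Ioi (0:ℝ), u ^ (a - 1) * (1 + u) ^ (-(a + ν)) with hJ
  have hJ0 : 0 ≤ J := by
    apply setIntegral_nonneg measurableSet_Ioi
    intro u hu
    have hu' : 0 < u := hu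
    exact mul_nonneg (rpow_nonneg hu'.le _) (rpow_nonneg (by linarith) _)
  refine ⟨J + 1, by linarith, ?_⟩
  intro w hw
  set s : ℝ := 1 - w with hs
  have hs1 : (1:ℝ) ≤ s := by rw [hs]; linarith
  have hs0 : 0 < s := lt_of_lt_of_le one_pos hs1
  -- step 1: rewrite integrand on Iic w
  have step1 : (∫ y in Set.Iic w, (1 + |y|) ^ (-(a + ν)) / (w - y) ^ (1 - a))
      = ∫ y in Set.Iic w, (fun t => (s + t) ^ (-(a + ν)) * t ^ (a - 1)) (w - y) := by
    apply setIntegral_congr_fun measurableSet_Iic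
    intro y hy
    simp only [Set.mem_Iic] at hy
    have hy0 : y ≤ 0 := le_trans hy hw
    show (1 + |y|) ^ (-(a + ν)) / (w - y) ^ (1 - a)
        = (s + (w - y)) ^ (-(a + ν)) * (w - y) ^ (a - 1)
    have h1 : (1:ℝ) + |y| = s + (w - y) := by
      rw [abs_of_nonpos hy0, hs]; ring
    have h2 : (0:ℝ) ≤ w - y := by linarith
    rw [h1, div_eq_mul_inv, ← Real.rpow_neg h2, neg_sub]
  -- step 2: substitution t = w - y
  have step2 : ∀ g : ℝ → ℝ, (∫ y in Set.Iic w, g (w - y)) = ∫ t in Set.Ioi (0:ℝ), g t := by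
    intro g
    have h1 : (∫ y in Set.Iic w, g (w - y)) = ∫ x in Set.Ioi (-w), g (w + x) := by
      rw [← integral_comp_neg_Iic w (fun x => g (w + x))]
      simp_rw [sub_eq_add_neg]
    rw [h1, ← integral_indicator measurableSet_Ioi, ← integral_indicator measurableSet_Ioi]
    have hind : ∀ x : ℝ, Set.indicator (Set.Ioi (-w)) (fun x => g (w + x)) x
        = Set.indicator (Set.Ioi 0) g (w + x) := by
      intro x
      by_cases hx : x ∈ Set.Ioi (-w)
      · rw [Set.indicator_of_mem hx, Set.indicator_of_mem]
        simp only [Set.mem_Ioi] at hx ⊢; linarith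
      · rw [Set.indicator_of_notMem hx, Set.indicator_of_notMem]
        simp only [Set.mem_Ioi] at hx ⊢; intro h; exact hx (by linarith)
    simp_rw [hind]
    exact integral_add_left_eq_self (Set.indicator (Set.Ioi 0) g) w
  -- step 3: scaling t = s * u
  have step3 : (∫ t in Set.Ioi (0:ℝ), (s + t) ^ (-(a + ν)) * t ^ (a - 1))
      = s ^ (-ν) * J := by
    have hcomp := integral_comp_mul_left_Ioi
      (fun t => (s + t) ^ (-(a + ν)) * t ^ (a - 1)) 0 hs0
    simp only [mul_zero, smul_eq_mul] at hcomp
    have hpt : (∫ u in Set.Ioi (0:ℝ),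
        (s + s * u) ^ (-(a + ν)) * (s * u) ^ (a - 1))
        = ∫ u in Set.Ioi (0:ℝ), s ^ (-(a + ν)) * s ^ (a - 1)
            * ((1 + u) ^ (-(a + ν)) * u ^ (a - 1)) := by
      apply setIntegral_congr_fun measurableSet_Ioi
      intro u hu
      have hu' : 0 < u := hu
      show (s + s * u) ^ (-(a + ν)) * (s * u) ^ (a - 1)
          = s ^ (-(a + ν)) * s ^ (a - 1) * ((1 + u) ^ (-(a + ν)) * u ^ (a - 1))
      have h1 : s + s * u = s * (1 + u) := by ring
      rw [h1, Real.mul_rpow hs0.le (by linarith), Real.mul_rpow hs0.le hu'.le]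
      ring
    have hJcomm : (∫ u in Set.Ioi (0:ℝ), (1 + u) ^ (-(a + ν)) * u ^ (a - 1)) = J := by
      rw [hJ]
      apply setIntegral_congr_fun measurableSet_Ioi
      intro u _
      show (1 + u) ^ (-(a + ν)) * u ^ (a - 1) = u ^ (a - 1) * (1 + u) ^ (-(a + ν))
      ring
    rw [hpt, integral_const_mul, hJcomm] at hcomp
    have hI : (∫ t in Set.Ioi (0:ℝ), (s + t) ^ (-(a + ν)) * t ^ (a - 1))
        = s * (s ^ (-(a + ν)) * s ^ (a - 1)) * J := by
      rw [mul_assoc, hcomp, ← mul_assoc, mul_inv_cancel₀ hs0.ne', one_mul]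
    rw [hI]
    congr 1
    nth_rewrite 1 [← Real.rpow_one s]
    rw [← Real.rpow_add hs0, ← Real.rpow_add hs0]
    congr 1
    ring
  rw [step1, step2 (fun t => (s + t) ^ (-(a + ν)) * t ^ (a - 1)), step3]
  have hws : (1:ℝ) + |w| = s := by rw [abs_of_nonpos hw, hs]; ring
  rw [hws]
  have hsν : 0 < s ^ (-ν) := rpow_pos_of_pos hs0 _
  nlinarith
end

section
/- Let $m\geq 0$, $a>0$, $p>1$ with $2-mp+2m>0$ and $2-mp+m>0$, and let $r,t\in\mathbb{R}$. Then $\int_{-2|t-r|-1}^{\min(t-r,0)}\int_0^{t-r-\tau} \frac{\lambda^{1-mp+2m}}{(t-r-\tau)^{m+a}\,(t-r-\tau-\lambda)^{1-a}}\,d\lambda\,d\tau \leq C\,(1+|t-r|)^{2-mp+m}$, with $C$ independent of $r,t$. -/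
open MeasureTheory Real

-- Inner integral evaluation via the substitution l = s*u
lemma inner_eval (α a m : ℝ) (s : ℝ) (hs : 0 < s) :
    (∫ l in (0:ℝ)..s, l ^ α / (s ^ (m + a) * (s - l) ^ (1 - a)))
      = s ^ (α - m) * ∫ u in (0:ℝ)..1, u ^ α * (1 - u) ^ (a - 1) := by
  have h1 : (∫ l in (0:ℝ)..s, l ^ α / (s ^ (m + a) * (s - l) ^ (1 - a)))
      = ∫ l in (0:ℝ)..s, s ^ (-(m + a)) * (l ^ α * (s - l) ^ (a - 1)) := by
    apply intervalIntegral.integral_congr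
    intro l hl
    simp only []
    rw [Set.uIcc_of_le hs.le] at hl
    have hsl : (0:ℝ) ≤ s - l := by linarith [hl.2]
    rw [div_eq_mul_inv, mul_inv, ← Real.rpow_neg hs.le, ← Real.rpow_neg hsl,
      show -(1 - a) = a - 1 by ring]
    ring
  rw [h1, intervalIntegral.integral_const_mul]
  have h2 : (∫ l in (0:ℝ)..s, l ^ α * (s - l) ^ (a - 1))
      = s * ∫ u in (0:ℝ)..1, (s * u) ^ α * (s - s * u) ^ (a - 1) := by
    rw [intervalIntegral.integral_comp_mul_left (fun l => l ^ α * (s - l) ^ (a - 1)) hs.ne',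
      mul_zero, mul_one, smul_eq_mul, ← mul_assoc, mul_inv_cancel₀ hs.ne', one_mul]
  rw [h2]
  have h3 : (∫ u in (0:ℝ)..1, (s * u) ^ α * (s - s * u) ^ (a - 1))
      = ∫ u in (0:ℝ)..1, (s ^ α * s ^ (a - 1)) * (u ^ α * (1 - u) ^ (a - 1)) := by
    apply intervalIntegral.integral_congr
    intro u hu
    simp only []
    rw [Set.uIcc_of_le (zero_le_one : (0:ℝ) ≤ 1)] at hu
    have h1u : (0:ℝ) ≤ 1 - u := by linarith [hu.2]
    rw [show s - s * u = s * (1 - u) by ring,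
      Real.mul_rpow hs.le hu.1, Real.mul_rpow hs.le h1u]
    ring
  rw [h3, intervalIntegral.integral_const_mul]
  rw [show s ^ (-(m+a)) * (s * (s ^ α * s ^ (a-1) * ∫ u in (0:ℝ)..1, u ^ α * (1-u) ^ (a-1)))
      = (s ^ (-(m+a)) * s ^ (1:ℝ) * s ^ α * s ^ (a-1)) * ∫ u in (0:ℝ)..1, u ^ α * (1-u) ^ (a-1)
      from by rw [Real.rpow_one]; ring]
  rw [← Real.rpow_add hs, ← Real.rpow_add hs, ← Real.rpow_add hs,
    show -(m+a) + 1 + α + (a-1) = α - m by ring]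

theorem stmt_7 (m a p : ℝ) (hm : 0 ≤ m) (ha : 0 < a) (hp : 1 < p)
    (h1 : 0 < 2 - m * p + 2 * m) (h2 : 0 < 2 - m * p + m) :
    ∃ C : ℝ, 0 < C ∧ ∀ r t : ℝ,
      (∫ τ in (-2 * |t - r| - 1)..(min (t - r) 0),
        ∫ l in (0:ℝ)..(t - r - τ),
          l ^ (1 - m * p + 2 * m) / ((t - r - τ) ^ (m + a) * (t - r - τ - l) ^ (1 - a))) ≤
        C * (1 + |t - r|) ^ (2 - m * p + m) := by
  set α := 1 - m * p + 2 * m with hα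
  set q := 1 - m * p + m with hq
  set B := ∫ u in (0:ℝ)..1, u ^ α * (1 - u) ^ (a - 1) with hB
  have hBnn : 0 ≤ B := by
    apply intervalIntegral.integral_nonneg zero_le_one
    intro u hu
    exact mul_nonneg (Real.rpow_nonneg hu.1 _) (Real.rpow_nonneg (by linarith [hu.2]) _)
  have hq1 : 0 < q + 1 := by rw [hq]; linarith
  refine ⟨B * 3 ^ (q + 1) / (q + 1) + 1, by positivity, fun r t => ?_⟩
  set x := |t - r| with hx
  have hxnn : (0:ℝ) ≤ x := abs_nonneg _
  set L : ℝ := -2 * x - 1 with hL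
  set U : ℝ := min (t - r) 0 with hU
  have htr1 : -(x) ≤ t - r := neg_abs_le _
  have htr2 : t - r ≤ x := le_abs_self _
  have hLU : L ≤ U := by
    rw [hL, hU, le_min_iff]
    constructor <;> linarith
  have hUtr : U ≤ t - r := min_le_left _ _
  -- Step 1: rewrite the outer integrand a.e.
  have hne : ∀ᵐ τ : ℝ, τ ≠ t - r := by
    rw [MeasureTheory.ae_iff]
    simp only [not_not]
    rw [show {τ : ℝ | τ = t - r} = {t - r} from Set.setOf_eq_eq_singleton]
    exact Real.volume_singleton
  have step1 : (∫ τ in L..U,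
        ∫ l in (0:ℝ)..(t - r - τ),
          l ^ α / ((t - r - τ) ^ (m + a) * (t - r - τ - l) ^ (1 - a)))
      = ∫ τ in L..U, B * (t - r - τ) ^ q := by
    apply intervalIntegral.integral_congr_ae
    filter_upwards [hne] with τ hτ hmem
    rw [Set.uIoc_of_le hLU] at hmem
    have hs : 0 < t - r - τ := by
      rcases lt_or_eq_of_le (le_trans hmem.2 hUtr) with h | h
      · linarith
      · exact absurd h hτ
    rw [inner_eval α a m (t - r - τ) hs, show α - m = q by rw [hα, hq]; ring, mul_comm]
  rw [step1, intervalIntegral.integral_const_mul]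
  -- Step 2: substitute and evaluate
  have step2 : (∫ τ in L..U, (t - r - τ) ^ q)
      = ∫ s in (t - r - U)..(t - r - L), s ^ q := by
    exact intervalIntegral.integral_comp_sub_left (fun s => s ^ q) (t - r)
  rw [step2, integral_rpow (Or.inl (by linarith : (-1:ℝ) < q))]
  have hcnn : (0:ℝ) ≤ t - r - U := by
    rw [hU]
    rcases le_total (t - r) 0 with h | h <;> simp [min_eq_left, min_eq_right, h] <;> linarith
  have hdnn : (0:ℝ) ≤ t - r - L := by rw [hL]; linarith
  have hdle : t - r - L ≤ 3 * (1 + x) := by rw [hL]; linarith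
  have key : (t - r - L) ^ (q + 1) - (t - r - U) ^ (q + 1)
      ≤ 3 ^ (q + 1) * (1 + x) ^ (q + 1) := by
    have k1 : (0:ℝ) ≤ (t - r - U) ^ (q + 1) := Real.rpow_nonneg hcnn _
    have k2 : (t - r - L) ^ (q + 1) ≤ (3 * (1 + x)) ^ (q + 1) :=
      Real.rpow_le_rpow hdnn hdle hq1.le
    rw [Real.mul_rpow (by norm_num) (by linarith)] at k2
    linarith
  have hpow : (0:ℝ) ≤ (1 + x) ^ (q + 1) := Real.rpow_nonneg (by linarith) _
  rw [show 2 - m * p + m = q + 1 from by rw [hq]; ring]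
  calc B * (((t - r - L) ^ (q + 1) - (t - r - U) ^ (q + 1)) / (q + 1))
      ≤ B * (3 ^ (q + 1) * (1 + x) ^ (q + 1) / (q + 1)) := by
        apply mul_le_mul_of_nonneg_left _ hBnn
        exact div_le_div_of_nonneg_right key hq1.le
    _ = B * 3 ^ (q + 1) / (q + 1) * (1 + x) ^ (q + 1) := by ring
    _ ≤ (B * 3 ^ (q + 1) / (q + 1) + 1) * (1 + x) ^ (q + 1) := by nlinarith
end

section
/- Let $m\geq 0$, $a>0$, $\kappa>2$ with $\kappa < m+2$, and let $r,t\in\mathbb{R}$. Then $\int_{-2|t-r|-1}^{\min(t-r,0)}\int_0^{t-r-\tau} \frac{\lambda^{m}(1+\lambda)^{1-\kappa}}{(t-r-\tau)^{m+a}\,(t-r-\tau-\lambda)^{1-a}}\,d\lambda\,d\tau \leq C$, with $C$ independent of $r,t$. -/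
open MeasureTheory Real Set intervalIntegral

noncomputable def Kc (m a κ : ℝ) : ℝ :=
  (2:ℝ)^(κ-1) * (max 1 ((2:ℝ)^(1-a))/(m+1) + 1/a)
    + max 1 ((2:ℝ)^(1-a)) * (2:ℝ)^(m+1)/(m+2-κ) + (2:ℝ)^(κ-1)/a

lemma Kc_pos (m a κ : ℝ) (hm : 0 ≤ m) (ha : 0 < a) (hκ : 2 < κ) (hκ2 : κ < m + 2) :
    0 < Kc m a κ := by
  have h1 : (0:ℝ) < (2:ℝ)^(κ-1) := rpow_pos_of_pos two_pos _
  have h2 : (0:ℝ) < max 1 ((2:ℝ)^(1-a)) := lt_of_lt_of_le one_pos (le_max_left _ _)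
  have h3 : (0:ℝ) < (2:ℝ)^(m+1) := rpow_pos_of_pos two_pos _
  have h4 : (0:ℝ) < m + 2 - κ := by linarith
  have h5 : (0:ℝ) < m + 1 := by linarith
  unfold Kc
  positivity

lemma key_ratio (a : ℝ) (ha : 0 < a) {s l : ℝ} (hs : 0 < s) (hl0 : 0 ≤ l) (hl : l ≤ s/2) :
    1 ≤ max 1 ((2:ℝ)^(1-a)) * (s^(a-1) * (s-l)^(1-a)) := by
  have hsl : 0 < s - l := by linarith
  have hx : s^(a-1) * (s-l)^(1-a) = ((s-l)/s)^(1-a) := by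
    rw [div_rpow hsl.le hs.le]
    rw [show a - 1 = -(1-a) by ring, rpow_neg hs.le]
    rw [div_eq_mul_inv, mul_comm]
  rw [hx]
  have hx1 : (1:ℝ)/2 ≤ (s-l)/s := by
    rw [div_le_div_iff₀ two_pos hs]; linarith
  have hx2 : (s-l)/s ≤ 1 := by
    rw [div_le_one hs]; linarith
  rcases le_total a 1 with h | h
  · have h1a : 0 ≤ 1 - a := by linarith
    have : ((1:ℝ)/2)^(1-a) ≤ ((s-l)/s)^(1-a) := rpow_le_rpow (by norm_num) hx1 h1a
    have e : ((1:ℝ)/2)^(1-a) = ((2:ℝ)^(1-a))⁻¹ := by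
      rw [one_div, inv_rpow (by norm_num : (0:ℝ) ≤ 2)]
    calc (1:ℝ) = (2:ℝ)^(1-a) * ((2:ℝ)^(1-a))⁻¹ := by
          rw [mul_inv_cancel₀ (ne_of_gt (rpow_pos_of_pos two_pos _))]
      _ ≤ max 1 ((2:ℝ)^(1-a)) * ((1:ℝ)/2)^(1-a) := by
          rw [e]; exact mul_le_mul_of_nonneg_right (le_max_right _ _) (by positivity)
      _ ≤ max 1 ((2:ℝ)^(1-a)) * ((s-l)/s)^(1-a) := by
          exact mul_le_mul_of_nonneg_left this (le_of_lt (lt_of_lt_of_le one_pos (le_max_left _ _)))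
  · have h1a : 1 - a ≤ 0 := by linarith
    have hxpos : 0 < (s-l)/s := div_pos hsl hs
    have : (1:ℝ) ≤ ((s-l)/s)^(1-a) := one_le_rpow_of_pos_of_le_one_of_nonpos hxpos hx2 h1a
    calc (1:ℝ) = 1 * 1 := by ring
      _ ≤ max 1 ((2:ℝ)^(1-a)) * ((s-l)/s)^(1-a) :=
          mul_le_mul (le_max_left _ _) this one_pos.le (le_of_lt (lt_of_lt_of_le one_pos (le_max_left _ _)))

lemma pt_T2 (m a κ : ℝ) (hm : 0 ≤ m) (ha : 0 < a) (hκ : 2 < κ) {s l : ℝ}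
    (hs : 0 < s) (hl : l ∈ Icc 0 s) (hl2 : s/2 ≤ l) :
    l^m * (1+l)^(1-κ) / (s^(m+a) * (s-l)^(1-a))
      ≤ s^(-a) * (1+s/2)^(1-κ) * (s-l)^(a-1) := by
  have hs2 : (0:ℝ) < 1 + s/2 := by linarith
  rcases eq_or_lt_of_le hl.2 with rfl | hls
  · simp only [sub_self]
    by_cases h1 : a = 1
    · subst h1
      simp only [sub_self, rpow_zero, mul_one]
      have e1 : l^(m+1) = l^m * l := by rw [rpow_add hs, rpow_one]
      rw [e1, show (-1 : ℝ) = -1 from rfl]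
      rw [div_le_iff₀ (by positivity)]
      have e2 : l ^ (-1:ℝ) = l⁻¹ := by rw [rpow_neg hs.le, rpow_one]
      rw [e2]
      have h3 : (1+l)^(1-κ) ≤ (1+l/2)^(1-κ) :=
        rpow_le_rpow_of_nonpos (by linarith) (by linarith) (by linarith)
      calc l^m * (1+l)^(1-κ) ≤ l^m * (1+l/2)^(1-κ) :=
            mul_le_mul_of_nonneg_left h3 (rpow_nonneg hs.le _)
        _ = l⁻¹ * (1+l/2)^(1-κ) * (l^m * l) := by
            field_simp
    · rw [zero_rpow (by intro h; apply h1; linarith [sub_eq_zero.mp h] : (1:ℝ) - a ≠ 0)]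
      rw [zero_rpow (by intro h; apply h1; linarith [sub_eq_zero.mp h] : a - 1 ≠ 0)]
      simp
  · have hsl : 0 < s - l := by linarith
    have hd : 0 < s^(m+a) * (s-l)^(1-a) :=
      mul_pos (rpow_pos_of_pos hs _) (rpow_pos_of_pos hsl _)
    rw [div_le_iff₀ hd]
    have e : s^(-a) * (1+s/2)^(1-κ) * (s-l)^(a-1) * (s^(m+a) * (s-l)^(1-a))
        = (s^(-a) * s^(m+a)) * ((s-l)^(a-1) * (s-l)^(1-a)) * (1+s/2)^(1-κ) := by ring
    rw [e, ← rpow_add hs, ← rpow_add hsl, show -a + (m+a) = m from by ring,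
      show a - 1 + (1-a) = 0 from by ring, rpow_zero, mul_one]
    exact mul_le_mul (rpow_le_rpow hl.1 hl.2 hm)
      (rpow_le_rpow_of_nonpos hs2 (by linarith) (by linarith))
      (rpow_nonneg (by linarith [hl.1]) _) (rpow_nonneg hs.le _)

lemma pt_T1_small (m a κ : ℝ) (hm : 0 ≤ m) (ha : 0 < a) (hκ : 2 < κ) {s l : ℝ}
    (hs : 0 < s) (hl0 : 0 ≤ l) (hl2 : l ≤ s/2) :
    l^m * (1+l)^(1-κ) / (s^(m+a) * (s-l)^(1-a))
      ≤ max 1 ((2:ℝ)^(1-a)) * s^(-(m+1)) * l^m := by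
  have hsl : 0 < s - l := by linarith
  have hd : 0 < s^(m+a) * (s-l)^(1-a) :=
    mul_pos (rpow_pos_of_pos hs _) (rpow_pos_of_pos hsl _)
  rw [div_le_iff₀ hd]
  have e : max 1 ((2:ℝ)^(1-a)) * s^(-(m+1)) * l^m * (s^(m+a) * (s-l)^(1-a))
      = l^m * (max 1 ((2:ℝ)^(1-a)) * (s^(a-1) * (s-l)^(1-a))) := by
    rw [show (-(m+1)) = (a-1) + (-(m+a)) from by ring, rpow_add hs, rpow_neg hs.le]
    field_simp
  rw [e]
  calc l^m * (1+l)^(1-κ) ≤ l^m * 1 :=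
        mul_le_mul_of_nonneg_left
          (rpow_le_one_of_one_le_of_nonpos (by linarith) (by linarith)) (rpow_nonneg hl0 _)
    _ ≤ l^m * (max 1 ((2:ℝ)^(1-a)) * (s^(a-1) * (s-l)^(1-a))) :=
        mul_le_mul_of_nonneg_left (key_ratio a ha hs hl0 hl2) (rpow_nonneg hl0 _)

lemma pt_T1_large (m a κ : ℝ) (hm : 0 ≤ m) (ha : 0 < a) (hκ : 2 < κ) {s l : ℝ}
    (hs : 0 < s) (hl0 : 0 ≤ l) (hl2 : l ≤ s/2) :
    l^m * (1+l)^(1-κ) / (s^(m+a) * (s-l)^(1-a))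
      ≤ max 1 ((2:ℝ)^(1-a)) * s^(-(m+1)) * (1+l)^(m+1-κ) := by
  have hsl : 0 < s - l := by linarith
  have hd : 0 < s^(m+a) * (s-l)^(1-a) :=
    mul_pos (rpow_pos_of_pos hs _) (rpow_pos_of_pos hsl _)
  rw [div_le_iff₀ hd]
  have e : max 1 ((2:ℝ)^(1-a)) * s^(-(m+1)) * (1+l)^(m+1-κ) * (s^(m+a) * (s-l)^(1-a))
      = (1+l)^(m+1-κ) * (max 1 ((2:ℝ)^(1-a)) * (s^(a-1) * (s-l)^(1-a))) := by
    rw [show (-(m+1)) = (a-1) + (-(m+a)) from by ring, rpow_add hs, rpow_neg hs.le]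
    field_simp
  rw [e]
  have h1 : l^m * (1+l)^(1-κ) ≤ (1+l)^(m+1-κ) := by
    rw [show m + 1 - κ = m + (1-κ) from by ring, rpow_add (by linarith : (0:ℝ) < 1 + l)]
    exact mul_le_mul_of_nonneg_right (rpow_le_rpow hl0 (by linarith) hm)
      (rpow_nonneg (by linarith) _)
  calc l^m * (1+l)^(1-κ) ≤ (1+l)^(m+1-κ) * 1 := by rw [mul_one]; exact h1
    _ ≤ (1+l)^(m+1-κ) * (max 1 ((2:ℝ)^(1-a)) * (s^(a-1) * (s-l)^(1-a))) :=
        mul_le_mul_of_nonneg_left (key_ratio a ha hs hl0 hl2) (rpow_nonneg (by linarith) _)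

lemma inner_bound (m a κ : ℝ) (hm : 0 ≤ m) (ha : 0 < a) (hκ : 2 < κ) (hκ2 : κ < m + 2)
    {s : ℝ} (hs : 0 ≤ s) :
    (∫ l in (0:ℝ)..s, l^m * (1+l)^(1-κ) / (s^(m+a) * (s-l)^(1-a)))
      ≤ Kc m a κ * (1+s)^(1-κ) := by
  have hK := Kc_pos m a κ hm ha hκ hκ2
  rcases eq_or_lt_of_le hs with rfl | hs
  · simp only [intervalIntegral.integral_same]
    have : (0:ℝ) < (1+(0:ℝ))^(1-κ) := rpow_pos_of_pos (by norm_num) _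
    positivity
  set c₁ := max 1 ((2:ℝ)^(1-a)) with hc₁def
  have hc1 : (0:ℝ) < c₁ := lt_of_lt_of_le one_pos (le_max_left _ _)
  have hw : (0:ℝ) < (1+s)^(1-κ) := rpow_pos_of_pos (by linarith) _
  have hRHS0 : (0:ℝ) ≤ Kc m a κ * (1+s)^(1-κ) := by positivity
  by_cases hint : IntervalIntegrable
      (fun l => l^m * (1+l)^(1-κ) / (s^(m+a) * (s-l)^(1-a))) volume 0 s
  swap
  · rw [intervalIntegral.integral_undef hint]; exact hRHS0
  -- integrability and value of the (s-l)^(a-1) piece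
  have hI2 : IntervalIntegrable (fun l => (s-l)^(a-1)) volume 0 s := by
    have := (intervalIntegral.intervalIntegrable_rpow' (show (-1:ℝ) < a-1 by linarith)
      (a := 0) (b := s)).comp_sub_left s
    simpa using this.symm
  have hIval2 : (∫ l in (0:ℝ)..s, (s-l)^(a-1)) = s^a / a := by
    have := intervalIntegral.integral_comp_sub_left (a := 0) (b := s)
      (fun x : ℝ => x^(a-1)) s
    simp only [sub_self, sub_zero] at this
    rw [this, integral_rpow (Or.inl (by linarith))]
    rw [zero_rpow (by linarith : a - 1 + 1 ≠ 0)]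
    norm_num
  have hT2nonneg : ∀ l ∈ Icc (0:ℝ) s, 0 ≤ s^(-a) * (1+s/2)^(1-κ) * (s-l)^(a-1) := by
    intro l hl
    exact mul_nonneg (mul_nonneg (rpow_nonneg hs.le _) (rpow_nonneg (by linarith) _))
      (rpow_nonneg (by linarith [hl.2]) _)
  have hsum2 : s^(-a) * (1+s/2)^(1-κ) * (s^a/a) = (1+s/2)^(1-κ)/a := by
    have e : s^(-a) * s^a = 1 := by
      rw [← rpow_add hs, show -a + a = 0 from by ring, rpow_zero]
    calc s^(-a) * (1+s/2)^(1-κ) * (s^a/a) = (s^(-a) * s^a) * (1+s/2)^(1-κ)/a := by ring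
      _ = (1+s/2)^(1-κ)/a := by rw [e, one_mul]
  rcases le_or_gt s 1 with hs1 | hs1
  · -- small s
    have hGint : IntervalIntegrable
        (fun l => c₁ * s^(-(m+1)) * l^m + s^(-a) * (1+s/2)^(1-κ) * (s-l)^(a-1)) volume 0 s :=
      ((intervalIntegral.intervalIntegrable_rpow' (by linarith)).const_mul _).add
        (hI2.const_mul _)
    have hptG : ∀ l ∈ Icc (0:ℝ) s,
        l^m * (1+l)^(1-κ) / (s^(m+a) * (s-l)^(1-a))
          ≤ c₁ * s^(-(m+1)) * l^m + s^(-a) * (1+s/2)^(1-κ) * (s-l)^(a-1) := by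
      intro l hl
      rcases le_total l (s/2) with h2 | h2
      · exact le_trans (pt_T1_small m a κ hm ha hκ hs hl.1 h2)
          (le_add_of_nonneg_right (hT2nonneg l hl))
      · exact le_trans (pt_T2 m a κ hm ha hκ hs hl h2)
          (le_add_of_nonneg_left (mul_nonneg (mul_nonneg hc1.le (rpow_nonneg hs.le _))
            (rpow_nonneg hl.1 _)))
    have hval : (∫ l in (0:ℝ)..s,
        (c₁ * s^(-(m+1)) * l^m + s^(-a) * (1+s/2)^(1-κ) * (s-l)^(a-1)))
          = c₁/(m+1) + (1+s/2)^(1-κ)/a := by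
      rw [intervalIntegral.integral_add
        ((intervalIntegral.intervalIntegrable_rpow' (by linarith)).const_mul _)
        (hI2.const_mul _), intervalIntegral.integral_const_mul,
        intervalIntegral.integral_const_mul, integral_rpow (Or.inl (by linarith : (-1:ℝ) < m)),
        hIval2, hsum2, zero_rpow (by linarith : m + 1 ≠ 0)]
      have e : s^(-(m+1)) * s^(m+1) = 1 := by
        rw [← rpow_add hs, show -(m+1) + (m+1) = 0 from by ring, rpow_zero]
      calc c₁ * s^(-(m+1)) * ((s^(m+1) - 0)/(m+1)) + (1+s/2)^(1-κ)/a
          = c₁ * (s^(-(m+1)) * s^(m+1)) / (m+1) + (1+s/2)^(1-κ)/a := by ring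
        _ = c₁/(m+1) + (1+s/2)^(1-κ)/a := by rw [e, mul_one]
    have step : (∫ l in (0:ℝ)..s, l^m * (1+l)^(1-κ) / (s^(m+a) * (s-l)^(1-a)))
        ≤ c₁/(m+1) + (1+s/2)^(1-κ)/a := by
      rw [← hval]
      exact intervalIntegral.integral_mono_on hs.le hint hGint hptG
    refine step.trans ?_
    have h1 : (1+s/2)^(1-κ) ≤ 1 := rpow_le_one_of_one_le_of_nonpos (by linarith) (by linarith)
    have h2 : (2:ℝ)^(1-κ) ≤ (1+s)^(1-κ) :=
      rpow_le_rpow_of_nonpos (by linarith) (by linarith) (by linarith)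
    have h3 : (2:ℝ)^(κ-1) * (2:ℝ)^(1-κ) = 1 := by
      rw [← rpow_add two_pos, show κ - 1 + (1-κ) = 0 from by ring, rpow_zero]
    have hP : (0:ℝ) < c₁/(m+1) + 1/a := by
      have : (0:ℝ) < m + 1 := by linarith
      positivity
    have h4 : c₁/(m+1) + (1+s/2)^(1-κ)/a ≤ c₁/(m+1) + 1/a := by gcongr
    have hKeq : Kc m a κ = (2:ℝ)^(κ-1) * (c₁/(m+1) + 1/a)
        + c₁ * (2:ℝ)^(m+1)/(m+2-κ) + (2:ℝ)^(κ-1)/a := by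
      rw [hc₁def]; unfold Kc; ring
    have hQR : (0:ℝ) ≤ c₁ * (2:ℝ)^(m+1)/(m+2-κ) + (2:ℝ)^(κ-1)/a := by
      have h5 : (0:ℝ) < m + 2 - κ := by linarith
      positivity
    have hPK : (2:ℝ)^(κ-1) * (c₁/(m+1) + 1/a) ≤ Kc m a κ := by rw [hKeq]; linarith
    calc c₁/(m+1) + (1+s/2)^(1-κ)/a ≤ c₁/(m+1) + 1/a := h4
      _ = ((2:ℝ)^(κ-1) * (c₁/(m+1) + 1/a)) * ((2:ℝ)^(1-κ)) := by
          rw [show (2:ℝ)^(κ-1) * (c₁/(m+1) + 1/a) * (2:ℝ)^(1-κ)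
            = (c₁/(m+1) + 1/a) * ((2:ℝ)^(κ-1) * (2:ℝ)^(1-κ)) from by ring, h3, mul_one]
      _ ≤ ((2:ℝ)^(κ-1) * (c₁/(m+1) + 1/a)) * ((1+s)^(1-κ)) := by
          refine mul_le_mul_of_nonneg_left h2 ?_
          positivity
      _ ≤ Kc m a κ * (1+s)^(1-κ) := mul_le_mul_of_nonneg_right hPK hw.le
  · -- large s
    have hmκ : (0:ℝ) < m + 2 - κ := by linarith
    have hI1 : IntervalIntegrable (fun l => (1+l)^(m+1-κ)) volume 0 s := by
      have := (intervalIntegral.intervalIntegrable_rpow'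
        (show (-1:ℝ) < m+1-κ by linarith) (a := 1) (b := 1+s)).comp_add_left 1
      simpa using this
    have hIval1 : (∫ l in (0:ℝ)..s, (1+l)^(m+1-κ))
        = ((1+s)^(m+2-κ) - 1)/(m+2-κ) := by
      have := intervalIntegral.integral_comp_add_left (a := 0) (b := s)
        (fun x : ℝ => x^(m+1-κ)) 1
      simp only [add_zero] at this
      rw [this, integral_rpow (Or.inl (by linarith)),
        show m+1-κ+1 = m+2-κ from by ring, one_rpow]
    have hGint : IntervalIntegrable
        (fun l => c₁ * s^(-(m+1)) * (1+l)^(m+1-κ)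
          + s^(-a) * (1+s/2)^(1-κ) * (s-l)^(a-1)) volume 0 s :=
      (hI1.const_mul _).add (hI2.const_mul _)
    have hptG : ∀ l ∈ Icc (0:ℝ) s,
        l^m * (1+l)^(1-κ) / (s^(m+a) * (s-l)^(1-a))
          ≤ c₁ * s^(-(m+1)) * (1+l)^(m+1-κ) + s^(-a) * (1+s/2)^(1-κ) * (s-l)^(a-1) := by
      intro l hl
      rcases le_total l (s/2) with h2 | h2
      · exact le_trans (pt_T1_large m a κ hm ha hκ hs hl.1 h2)
          (le_add_of_nonneg_right (hT2nonneg l hl))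
      · exact le_trans (pt_T2 m a κ hm ha hκ hs hl h2)
          (le_add_of_nonneg_left (mul_nonneg (mul_nonneg hc1.le (rpow_nonneg hs.le _))
            (rpow_nonneg (by linarith [hl.1]) _)))
    have hval : (∫ l in (0:ℝ)..s,
        (c₁ * s^(-(m+1)) * (1+l)^(m+1-κ) + s^(-a) * (1+s/2)^(1-κ) * (s-l)^(a-1)))
          = c₁ * s^(-(m+1)) * (((1+s)^(m+2-κ) - 1)/(m+2-κ)) + (1+s/2)^(1-κ)/a := by
      rw [intervalIntegral.integral_add (hI1.const_mul _) (hI2.const_mul _),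
        intervalIntegral.integral_const_mul, intervalIntegral.integral_const_mul,
        hIval1, hIval2, hsum2]
    have step : (∫ l in (0:ℝ)..s, l^m * (1+l)^(1-κ) / (s^(m+a) * (s-l)^(1-a)))
        ≤ c₁ * s^(-(m+1)) * (((1+s)^(m+2-κ) - 1)/(m+2-κ)) + (1+s/2)^(1-κ)/a := by
      rw [← hval]
      exact intervalIntegral.integral_mono_on hs.le hint hGint hptG
    refine step.trans ?_
    have f1 : s^(-(m+1)) ≤ (2:ℝ)^(m+1) * (1+s)^(-(m+1)) := by
      have hq : (1+s)/s ≤ 2 := by rw [div_le_iff₀ hs]; linarith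
      have hq2 : ((1+s)/s)^(m+1) ≤ (2:ℝ)^(m+1) := rpow_le_rpow (by positivity) hq (by linarith)
      have e : ((1+s)/s)^(m+1) = (1+s)^(m+1) * s^(-(m+1)) := by
        rw [div_rpow (by linarith) hs.le, rpow_neg hs.le, div_eq_mul_inv]
      have e2 : (1+s)^(-(m+1)) * (1+s)^(m+1) = 1 := by
        rw [← rpow_add (by linarith : (0:ℝ) < 1 + s),
          show -(m+1) + (m+1) = 0 from by ring, rpow_zero]
      calc s^(-(m+1)) = ((1+s)^(-(m+1)) * (1+s)^(m+1)) * s^(-(m+1)) := by rw [e2, one_mul]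
        _ = (1+s)^(-(m+1)) * ((1+s)^(m+1) * s^(-(m+1))) := by ring
        _ ≤ (1+s)^(-(m+1)) * (2:ℝ)^(m+1) := by
            refine mul_le_mul_of_nonneg_left ?_ (rpow_nonneg (by linarith) _)
            rw [← e]; exact hq2
        _ = (2:ℝ)^(m+1) * (1+s)^(-(m+1)) := by ring
    have f3 : (1+s)^(-(m+1)) * (1+s)^(m+2-κ) = (1+s)^(1-κ) := by
      rw [← rpow_add (by linarith : (0:ℝ) < 1 + s),
        show -(m+1)+(m+2-κ) = 1-κ from by ring]
    have hw1 : (0:ℝ) ≤ (1+s)^(m+2-κ) := rpow_nonneg (by linarith) _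
    have hpw1 : c₁ * s^(-(m+1)) * (((1+s)^(m+2-κ) - 1)/(m+2-κ))
        ≤ c₁ * (2:ℝ)^(m+1)/(m+2-κ) * (1+s)^(1-κ) := by
      calc c₁ * s^(-(m+1)) * (((1+s)^(m+2-κ) - 1)/(m+2-κ))
          ≤ c₁ * s^(-(m+1)) * ((1+s)^(m+2-κ)/(m+2-κ)) := by
            refine mul_le_mul_of_nonneg_left ?_ (by positivity)
            gcongr
            linarith
        _ ≤ c₁ * ((2:ℝ)^(m+1) * (1+s)^(-(m+1))) * ((1+s)^(m+2-κ)/(m+2-κ)) := by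
            refine mul_le_mul_of_nonneg_right (mul_le_mul_of_nonneg_left f1 hc1.le)
              (by positivity)
        _ = c₁ * (2:ℝ)^(m+1)/(m+2-κ) * ((1+s)^(-(m+1)) * (1+s)^(m+2-κ)) := by ring
        _ = c₁ * (2:ℝ)^(m+1)/(m+2-κ) * (1+s)^(1-κ) := by rw [f3]
    have hpw2 : (1+s/2)^(1-κ)/a ≤ (2:ℝ)^(κ-1)/a * (1+s)^(1-κ) := by
      have g1 : (1+s/2)^(1-κ) ≤ ((1+s)/2)^(1-κ) :=
        rpow_le_rpow_of_nonpos (by linarith) (by linarith) (by linarith)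
      have g2 : ((1+s)/2)^(1-κ) = (1+s)^(1-κ) * (2:ℝ)^(κ-1) := by
        rw [div_rpow (by linarith) (by norm_num), show (κ-1) = -(1-κ) from by ring,
          rpow_neg (by norm_num : (0:ℝ) ≤ 2), div_eq_mul_inv]
      calc (1+s/2)^(1-κ)/a ≤ ((1+s)/2)^(1-κ)/a := by gcongr
        _ = (2:ℝ)^(κ-1)/a * (1+s)^(1-κ) := by rw [g2]; ring
    have hKeq : Kc m a κ = (2:ℝ)^(κ-1) * (c₁/(m+1) + 1/a)
        + c₁ * (2:ℝ)^(m+1)/(m+2-κ) + (2:ℝ)^(κ-1)/a := by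
      rw [hc₁def]; unfold Kc; ring
    have hPw : (0:ℝ) ≤ (2:ℝ)^(κ-1) * (c₁/(m+1) + 1/a) * (1+s)^(1-κ) := by
      have h5 : (0:ℝ) < m + 1 := by linarith
      positivity
    have hKw : Kc m a κ * (1+s)^(1-κ)
        = (2:ℝ)^(κ-1) * (c₁/(m+1) + 1/a) * (1+s)^(1-κ)
          + c₁ * (2:ℝ)^(m+1)/(m+2-κ) * (1+s)^(1-κ)
          + (2:ℝ)^(κ-1)/a * (1+s)^(1-κ) := by rw [hKeq]; ring
    linarith

theorem stmt_8 (m a κ : ℝ) (hm : 0 ≤ m) (ha : 0 < a) (hκ : 2 < κ) (hκ2 : κ < m + 2) :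
    ∃ C : ℝ, 0 < C ∧ ∀ r t : ℝ,
      (∫ τ in (-2 * |t - r| - 1)..(min (t - r) 0),
        ∫ l in (0:ℝ)..(t - r - τ),
          l ^ m * (1 + l) ^ (1 - κ) /
            ((t - r - τ) ^ (m + a) * (t - r - τ - l) ^ (1 - a))) ≤ C := by
  have hK := Kc_pos m a κ hm ha hκ hκ2
  have hκ2' : (0:ℝ) < κ - 2 := by linarith
  refine ⟨Kc m a κ / (κ - 2), div_pos hK hκ2', ?_⟩
  intro r t
  set d := t - r with hd
  set A := -2 * |d| - 1 with hA
  set B := min d 0 with hB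
  have hBd : B ≤ d := min_le_left d 0
  have hAB : A ≤ B := by
    rw [hA, hB]
    refine le_min ?_ ?_
    · have := neg_abs_le d
      have := abs_nonneg d
      linarith
    · have := abs_nonneg d
      linarith
  have hu0 : (1:ℝ) ≤ (1+d) - B := by linarith
  have hu1 : (1:ℝ) ≤ (1+d) - A := by linarith
  by_cases hF : IntervalIntegrable (fun τ => ∫ l in (0:ℝ)..(d - τ),
      l ^ m * (1 + l) ^ (1 - κ) / ((d - τ) ^ (m + a) * (d - τ - l) ^ (1 - a))) volume A B
  swap
  · rw [intervalIntegral.integral_undef hF]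
    positivity
  have hbase : IntervalIntegrable (fun x => x^(1-κ)) volume ((1+d) - B) ((1+d) - A) := by
    refine intervalIntegral.intervalIntegrable_rpow (Or.inr ?_)
    intro h
    rw [Set.mem_uIcc] at h
    rcases h with ⟨h1, _⟩ | ⟨h1, _⟩ <;> linarith
  have hGint : IntervalIntegrable (fun τ => Kc m a κ * ((1+d) - τ)^(1-κ)) volume A B := by
    have := hbase.comp_sub_left (1+d)
    simp only [sub_sub_cancel] at this
    exact (this.symm).const_mul _
  have hptG : ∀ τ ∈ Icc A B,
      (∫ l in (0:ℝ)..(d - τ),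
        l ^ m * (1 + l) ^ (1 - κ) / ((d - τ) ^ (m + a) * (d - τ - l) ^ (1 - a)))
      ≤ Kc m a κ * ((1+d) - τ)^(1-κ) := by
    intro τ hτ
    have hs : 0 ≤ d - τ := by linarith [hτ.2]
    have := inner_bound m a κ hm ha hκ hκ2 hs
    rwa [show 1 + (d - τ) = (1+d) - τ from by ring] at this
  calc (∫ τ in A..B, ∫ l in (0:ℝ)..(d - τ),
        l ^ m * (1 + l) ^ (1 - κ) / ((d - τ) ^ (m + a) * (d - τ - l) ^ (1 - a)))
      ≤ ∫ τ in A..B, Kc m a κ * ((1+d) - τ)^(1-κ) :=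
        intervalIntegral.integral_mono_on hAB hF hGint hptG
    _ = Kc m a κ * ∫ τ in A..B, ((1+d) - τ)^(1-κ) :=
        intervalIntegral.integral_const_mul _ _
    _ ≤ Kc m a κ / (κ - 2) := by
        have e1 : (∫ τ in A..B, ((1+d) - τ)^(1-κ))
            = ∫ x in ((1+d) - B)..((1+d) - A), x^(1-κ) :=
          intervalIntegral.integral_comp_sub_left (fun x : ℝ => x^(1-κ)) (1+d)
        have e2 : (∫ x in ((1+d) - B)..((1+d) - A), x^(1-κ))
            = (((1+d) - A)^(2-κ) - ((1+d) - B)^(2-κ))/(2-κ) := by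
          rw [integral_rpow (Or.inr ⟨by intro h; linarith [sub_eq_iff_eq_add.mp h], ?_⟩)]
          · rw [show 1-κ+1 = 2-κ from by ring]
          · intro h
            rw [Set.mem_uIcc] at h
            rcases h with ⟨h1, _⟩ | ⟨h1, _⟩ <;> linarith
        have h1 : ((1+d) - B)^(2-κ) ≤ 1 :=
          rpow_le_one_of_one_le_of_nonpos hu0 (by linarith)
        have h2 : (0:ℝ) ≤ ((1+d) - A)^(2-κ) := rpow_nonneg (by linarith) _
        have e3 : (((1+d) - A)^(2-κ) - ((1+d) - B)^(2-κ))/(2-κ)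
            = (((1+d) - B)^(2-κ) - ((1+d) - A)^(2-κ))/(κ-2) := by
          rw [div_eq_div_iff (by linarith) (by linarith)]
          ring
        have h4 : (((1+d) - B)^(2-κ) - ((1+d) - A)^(2-κ))/(κ-2) ≤ 1/(κ-2) := by
          gcongr
          linarith
        rw [e1, e2, e3]
        calc Kc m a κ * ((((1+d) - B)^(2-κ) - ((1+d) - A)^(2-κ))/(κ-2))
            ≤ Kc m a κ * (1/(κ-2)) := mul_le_mul_of_nonneg_left h4 hK.le
          _ = Kc m a κ / (κ - 2) := by ring
end

section
/- Let $b_1<1$, $a>0$, $\nu>0$, and $b_2\in\mathbb{R}$ with $b_1+b_2=a+\nu$. Then for all $r>0$ and $t\in\mathbb{R}$: $\int_{t-r}^{t+r} \frac{(1+|y|)^{-b_1}}{(r-t+y)^{1-a}}\cdot \max(1+|y|,\,1+|t-r|)^{-b_2}\,dy \leq C\, r^a\,(1+|t|+r)^{-a}(1+||t|-r|)^{-\nu}$, with $C$ independent of $r,t$. -/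
/-!
Substituting `z = y - (t - r)` and writing `s = t - r`, `L = 1 + |s|`, `w = 1 + |z + s|`,
`M = max w L`, the integral becomes `∫₀^{2r} z^(a-1) w^(-b₁) M^(-b₂) dz`. Since `b₁ + b₂ = a + ν`
the integrand is `z^(a-1) M^(-(a+ν)) (M/w)^b₁ ≤ z^(a-1) M^(-(a+ν)) (M/w)^θ` with
`θ = max b₁ 0 < 1`, and `M` is comparable to `L + z`. The factor `(M/w)^θ` is `1` except when
`s < 0` and `z ≤ -2s`; there `M = L` and the singularity `(1 + |z + s|)^(-θ)` at `z = -s` is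
integrable because `θ < 1`. What is left is `∫₀^R z^(a-1) (L+z)^(-(a+ν)) dz`, which is
`≲ (R/L)^a L^(-ν)` for `R ≤ L` and `≲ L^(-ν)` for `R ≥ L`, i.e. `≲ (R/(L+R))^a L^(-ν)`.
-/

open MeasureTheory Real Set

theorem rpow_le_two_rpow_abs_mul_rpow_s11 {c z : ℝ} (p : ℝ) (hc : 0 < c) (h₁ : c / 2 ≤ z)
    (h₂ : z ≤ 2 * c) : z ^ p ≤ 2 ^ |p| * c ^ p := by
  rcases le_or_gt 0 p with hp | hp
  · calc z ^ p ≤ (2 * c) ^ p := rpow_le_rpow (by linarith) h₂ hp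
      _ = 2 ^ |p| * c ^ p := by rw [mul_rpow zero_le_two hc.le, abs_of_nonneg hp]
  · calc z ^ p ≤ (c / 2) ^ p := rpow_le_rpow_of_nonpos (by linarith) h₁ hp.le
      _ = 2 ^ |p| * c ^ p := by
        rw [div_rpow hc.le zero_le_two, abs_of_neg hp, rpow_neg zero_le_two, div_eq_inv_mul]

theorem integral_rpow_sub_one_mul_le {a m K : ℝ} {g : ℝ → ℝ} (ha : 0 < a) (hm : 0 ≤ m)
    (hg : ContinuousOn g (Icc 0 m)) (hgK : ∀ z ∈ Icc 0 m, g z ≤ K) :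
    ∫ z in 0..m, z ^ (a - 1) * g z ≤ K * (m ^ a / a) := by
  have hpow : IntervalIntegrable (fun z : ℝ => z ^ (a - 1)) volume 0 m :=
    intervalIntegral.intervalIntegrable_rpow' (by linarith)
  calc ∫ z in 0..m, z ^ (a - 1) * g z ≤ ∫ z in 0..m, K * z ^ (a - 1) := by
        refine intervalIntegral.integral_mono_on hm
          (hpow.mul_continuousOn (by rwa [uIcc_of_le hm])) (hpow.const_mul K) fun z hz => ?_
        rw [mul_comm K]
        exact mul_le_mul_of_nonneg_left (hgK z hz) (rpow_nonneg hz.1 _)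
    _ = K * (m ^ a / a) := by
        rw [intervalIntegral.integral_const_mul, integral_rpow (Or.inl (by linarith)),
          sub_add_cancel, zero_rpow ha.ne', sub_zero]

theorem integral_rpow_neg_one_sub_le {ν u v : ℝ} (hν : 0 < ν) (hu : 0 < u) (huv : u ≤ v) :
    ∫ z in u..v, z ^ (-1 - ν) ≤ u ^ (-ν) / ν := by
  have h0 : (0 : ℝ) ∉ uIcc u v := by
    rw [uIcc_of_le huv]; exact fun h => hu.not_ge h.1
  rw [integral_rpow (Or.inr ⟨by linarith, h0⟩), show -1 - ν + 1 = -ν by ring, div_neg,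
    ← neg_div, neg_sub]
  gcongr
  linarith [rpow_nonneg (hu.le.trans huv) (-ν)]

theorem integral_one_add_abs_sub_rpow_neg_le {θ l : ℝ} (hθ : θ < 1) (hl : 0 ≤ l) :
    ∫ z in 0..2 * l, (1 + |z - l|) ^ (-θ) ≤ 2 * ((1 + l) ^ (1 - θ) / (1 - θ)) := by
  set h : ℝ → ℝ := fun x => (1 + |x|) ^ (-θ)
  have hcont : Continuous h :=
    (continuous_const.add continuous_abs).rpow_const fun x =>
      Or.inl (by positivity : (0 : ℝ) < 1 + |x|).ne'
  have hhalf : ∫ x in 0..l, h x ≤ (1 + l) ^ (1 - θ) / (1 - θ) := by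
    calc ∫ x in 0..l, h x = ∫ x in 0..l, (1 + x) ^ (-θ) :=
          intervalIntegral.integral_congr fun x hx => by
            rw [uIcc_of_le hl] at hx; simp only [h, abs_of_nonneg hx.1]
      _ = ((1 + l) ^ (1 - θ) - 1) / (1 - θ) := by
          rw [intervalIntegral.integral_comp_add_left (fun x => x ^ (-θ)),
            integral_rpow (Or.inl (by linarith))]
          norm_num [show -θ + 1 = 1 - θ by ring]
      _ ≤ (1 + l) ^ (1 - θ) / (1 - θ) := by gcongr; linarith
  have hsymm : ∫ x in -l..0, h x = ∫ x in 0..l, h x := by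
    rw [← neg_zero, ← intervalIntegral.integral_comp_neg]
    simp only [h, abs_neg, neg_zero]
  calc ∫ z in 0..2 * l, (1 + |z - l|) ^ (-θ) = ∫ x in -l..l, h x := by
        rw [intervalIntegral.integral_comp_sub_right h l]; ring_nf
    _ = (∫ x in -l..0, h x) + ∫ x in 0..l, h x :=
        (intervalIntegral.integral_add_adjacent_intervals
          (hcont.intervalIntegrable (μ := volume) _ _) (hcont.intervalIntegrable _ _)).symm
    _ ≤ 2 * ((1 + l) ^ (1 - θ) / (1 - θ)) := by linarith

theorem rpow_div_le_mul_rpow_div_add {a c L m R : ℝ} (ha : 0 ≤ a) (hL : 0 < L) (hm : 0 ≤ m)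
    (hmR : m ≤ R) (hc : L + m ≤ c * L) : (m / L) ^ a ≤ c ^ a * (R / (L + R)) ^ a := by
  have hR : 0 ≤ R := hm.trans hmR
  have hc0 : 0 ≤ c := by nlinarith
  rw [← mul_rpow hc0 (by positivity)]
  refine rpow_le_rpow (by positivity) ?_ ha
  rw [div_le_iff₀ hL, mul_div_assoc', div_mul_eq_mul_div, le_div_iff₀ (by linarith)]
  nlinarith [mul_le_mul_of_nonneg_left hmR hL.le]

theorem intervalIntegrable_rpow_sub_one_mul {a u v : ℝ} {g : ℝ → ℝ} (ha : 0 < a) (hu : 0 ≤ u)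
    (huv : u ≤ v) (hg : ContinuousOn g (Ici 0)) :
    IntervalIntegrable (fun z => z ^ (a - 1) * g z) volume u v :=
  (intervalIntegral.intervalIntegrable_rpow' (by linarith)).mul_continuousOn
    (hg.mono fun z hz => by rw [uIcc_of_le huv] at hz; exact hu.trans hz.1)

theorem continuousOn_add_rpow_Ici {L : ℝ} (hL : 0 < L) (p : ℝ) :
    ContinuousOn (fun z => (L + z) ^ p) (Ici 0) :=
  (continuousOn_const.add continuousOn_id).rpow_const fun z hz =>
    Or.inl (by linarith [mem_Ici.mp hz] : (0 : ℝ) < L + z).ne'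

theorem integral_rpow_sub_one_mul_add_rpow_neg_le_of_le {a ν L R : ℝ} (ha : 0 ≤ a) (hν : 0 < ν)
    (hL : 0 < L) (hLR : L ≤ R) :
    ∫ z in L..R, z ^ (a - 1) * (L + z) ^ (-(a + ν)) ≤ L ^ (-ν) / ν := by
  have hcont : ContinuousOn (fun z : ℝ => z ^ (a - 1) * (L + z) ^ (-(a + ν))) (uIcc L R) := by
    rw [uIcc_of_le hLR]
    exact (continuousOn_id.rpow_const fun z hz => Or.inl (hL.trans_le hz.1).ne').mul
      ((continuousOn_add_rpow_Ici hL _).mono fun z hz => (hL.trans_le hz.1).le)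
  have hcont' : ContinuousOn (fun z : ℝ => z ^ (-1 - ν)) (uIcc L R) := by
    rw [uIcc_of_le hLR]
    exact continuousOn_id.rpow_const fun z hz => Or.inl (hL.trans_le hz.1).ne'
  refine (intervalIntegral.integral_mono_on hLR hcont.intervalIntegrable
    hcont'.intervalIntegrable fun z hz => ?_).trans (integral_rpow_neg_one_sub_le hν hL hLR)
  have hz : 0 < z := hL.trans_le hz.1
  calc z ^ (a - 1) * (L + z) ^ (-(a + ν)) ≤ z ^ (a - 1) * z ^ (-(a + ν)) :=
        mul_le_mul_of_nonneg_left
          (rpow_le_rpow_of_nonpos hz (by linarith) (by linarith)) (rpow_nonneg hz.le _)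
    _ = z ^ (-1 - ν) := by rw [← rpow_add hz]; ring_nf

theorem integral_rpow_sub_one_mul_add_rpow_neg_le {a ν L R : ℝ} (ha : 0 < a) (hν : 0 < ν)
    (hL : 0 < L) (hR : 0 ≤ R) :
    ∫ z in 0..R, z ^ (a - 1) * (L + z) ^ (-(a + ν)) ≤
      2 ^ a * (1 / a + 1 / ν) * (R / (L + R)) ^ a * L ^ (-ν) := by
  have hcont := continuousOn_add_rpow_Ici hL (-(a + ν))
  have hint : ∀ u v, 0 ≤ u → u ≤ v →
      IntervalIntegrable (fun z : ℝ => z ^ (a - 1) * (L + z) ^ (-(a + ν))) volume u v :=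
    fun u v hu huv => intervalIntegrable_rpow_sub_one_mul ha hu huv hcont
  have hhead : ∀ m, 0 ≤ m →
      ∫ z in 0..m, z ^ (a - 1) * (L + z) ^ (-(a + ν)) ≤ 1 / a * (m / L) ^ a * L ^ (-ν) := by
    intro m hm
    refine (integral_rpow_sub_one_mul_le ha hm (hcont.mono Icc_subset_Ici_self)
      fun z hz => rpow_le_rpow_of_nonpos hL (by linarith [hz.1]) (by linarith)).trans_eq ?_
    rw [div_rpow hm hL.le, neg_add, rpow_add hL, rpow_neg hL.le]
    field_simp
  rcases le_or_gt R L with hRL | hLR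
  · calc _ ≤ 1 / a * (R / L) ^ a * L ^ (-ν) := hhead R hR
      _ ≤ 1 / a * (2 ^ a * (R / (L + R)) ^ a) * L ^ (-ν) := by
          gcongr; exact rpow_div_le_mul_rpow_div_add ha.le hL hR le_rfl (by linarith)
      _ ≤ 2 ^ a * (1 / a + 1 / ν) * (R / (L + R)) ^ a * L ^ (-ν) := by
          have : 0 ≤ 2 ^ a * (1 / ν) * ((R / (L + R)) ^ a * L ^ (-ν)) := by positivity
          linarith
  · have htail := integral_rpow_sub_one_mul_add_rpow_neg_le_of_le ha.le hν hL hLR.le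
    have hone : (1 : ℝ) ≤ 2 ^ a * (R / (L + R)) ^ a := by
      simpa [div_self hL.ne'] using
        rpow_div_le_mul_rpow_div_add ha.le hL hL.le hLR.le (by linarith : L + L ≤ 2 * L)
    rw [← intervalIntegral.integral_add_adjacent_intervals (hint 0 L le_rfl hL.le)
      (hint L R hL.le hLR.le)]
    have hhead' := hhead L hL.le
    rw [div_self hL.ne', one_rpow, mul_one] at hhead'
    calc _ ≤ 1 / a * L ^ (-ν) + L ^ (-ν) / ν := add_le_add hhead' htail
      _ = (1 / a + 1 / ν) * 1 * L ^ (-ν) := by ring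
      _ ≤ (1 / a + 1 / ν) * (2 ^ a * (R / (L + R)) ^ a) * L ^ (-ν) := by gcongr
      _ = 2 ^ a * (1 / a + 1 / ν) * (R / (L + R)) ^ a * L ^ (-ν) := by ring

theorem integral_rpow_sub_one_mul_div_one_add_abs_sub_rpow_le {a θ l m : ℝ} (ha : 0 < a)
    (hθ : θ < 1) (hl : 0 < l) (hm : l / 2 ≤ m) (hml : m ≤ 2 * l) :
    ∫ z in l / 2..m, z ^ (a - 1) * ((1 + l) / (1 + |z - l|)) ^ θ ≤
      2 * 2 ^ |a - 1| / (1 - θ) * (l ^ (a - 1) * (1 + l)) := by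
  have hw : ∀ z, 0 < 1 + |z - l| := fun z => by positivity
  have hbase : Continuous fun z => 1 + |z - l| := by fun_prop
  have hwcont : Continuous fun z => (1 + |z - l|) ^ (-θ) :=
    hbase.rpow_const fun z => Or.inl (hw z).ne'
  set K := 2 ^ |a - 1| * l ^ (a - 1) * (1 + l) ^ θ with hK
  have hpt : ∀ z ∈ Icc (l / 2) m,
      z ^ (a - 1) * ((1 + l) / (1 + |z - l|)) ^ θ ≤ K * (1 + |z - l|) ^ (-θ) := by
    intro z hz
    rw [div_rpow (by positivity) (hw z).le, div_eq_mul_inv, ← rpow_neg (hw z).le]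
    calc z ^ (a - 1) * ((1 + l) ^ θ * (1 + |z - l|) ^ (-θ))
        ≤ (2 ^ |a - 1| * l ^ (a - 1)) * ((1 + l) ^ θ * (1 + |z - l|) ^ (-θ)) :=
          mul_le_mul_of_nonneg_right
            (rpow_le_two_rpow_abs_mul_rpow_s11 (a - 1) hl hz.1 (hz.2.trans hml)) (by positivity)
      _ = K * (1 + |z - l|) ^ (-θ) := by ring
  have hint : IntervalIntegrable
      (fun z : ℝ => z ^ (a - 1) * ((1 + l) / (1 + |z - l|)) ^ θ) volume (l / 2) m :=
    intervalIntegrable_rpow_sub_one_mul ha (by linarith) hm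
      ((continuous_const.div hbase fun z => (hw z).ne').rpow_const
        fun z => Or.inl (div_pos (by linarith) (hw z)).ne').continuousOn
  calc _ ≤ ∫ z in l / 2..m, K * (1 + |z - l|) ^ (-θ) :=
        intervalIntegral.integral_mono_on hm hint
          ((hwcont.intervalIntegrable _ _).const_mul K) hpt
    _ = K * ∫ z in l / 2..m, (1 + |z - l|) ^ (-θ) := intervalIntegral.integral_const_mul _ _
    _ ≤ K * ∫ z in 0..2 * l, (1 + |z - l|) ^ (-θ) := by
        gcongr
        exact intervalIntegral.integral_mono_interval (by linarith) hm hml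
          (Filter.Eventually.of_forall fun z => by positivity) (hwcont.intervalIntegrable _ _)
    _ ≤ K * (2 * ((1 + l) ^ (1 - θ) / (1 - θ))) := by
        gcongr; exact integral_one_add_abs_sub_rpow_neg_le hθ hl.le
    _ = 2 * 2 ^ |a - 1| / (1 - θ) * (l ^ (a - 1) * ((1 + l) ^ θ * (1 + l) ^ (1 - θ))) := by
        ring
    _ = 2 * 2 ^ |a - 1| / (1 - θ) * (l ^ (a - 1) * (1 + l)) := by
        rw [← rpow_add (by positivity), add_sub_cancel, rpow_one]

theorem exists_integral_rpow_sub_one_mul_div_one_add_abs_sub_rpow_le {a θ : ℝ} (ha : 0 < a)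
    (hθ₀ : 0 ≤ θ) (hθ : θ < 1) :
    ∃ C, 0 < C ∧ ∀ l m : ℝ, 0 ≤ l → 0 ≤ m → m ≤ 2 * l →
      ∫ z in 0..m, z ^ (a - 1) * ((1 + l) / (1 + |z - l|)) ^ θ ≤ C * m ^ a := by
  have h1θ : 0 < 1 - θ := by linarith
  refine ⟨2 ^ θ / a + 4 * 2 ^ |a - 1| * 2 ^ a / (1 - θ), by positivity,
    fun l m hl hm hml => ?_⟩
  have hw : ∀ z, 0 < 1 + |z - l| := fun z => by positivity
  have hcont : Continuous fun z => ((1 + l) / (1 + |z - l|)) ^ θ := by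
    fun_prop (disch := intros; positivity)
  have hfar : ∀ m', 0 ≤ m' → (m' ≤ l / 2 ∨ l ≤ 1) →
      ∫ z in 0..m', z ^ (a - 1) * ((1 + l) / (1 + |z - l|)) ^ θ ≤ 2 ^ θ / a * m' ^ a := by
    intro m' hm' hcase
    refine (integral_rpow_sub_one_mul_le (K := 2 ^ θ) ha hm' hcont.continuousOn
      fun z hz => ?_).trans_eq (by ring)
    refine rpow_le_rpow (by positivity) ?_ hθ₀
    rw [div_le_iff₀ (hw z)]
    rcases hcase with h | h
    · linarith [le_abs_self (z - l), neg_abs_le (z - l), hz.2]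
    · linarith [abs_nonneg (z - l)]
  have hC : 2 ^ θ / a ≤ 2 ^ θ / a + 4 * 2 ^ |a - 1| * 2 ^ a / (1 - θ) := by
    linarith [show 0 ≤ 4 * 2 ^ |a - 1| * 2 ^ a / (1 - θ) by positivity]
  rcases le_or_gt m (l / 2) with hml' | hml'
  · exact (hfar m hm (Or.inl hml')).trans (by gcongr)
  rcases le_or_gt l 1 with hl1 | hl1
  · exact (hfar m hm (Or.inr hl1)).trans (by gcongr)
  have hl0 : 0 < l := by linarith
  have hscale : l ^ (a - 1) * (1 + l) ≤ 2 * 2 ^ a * m ^ a := by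
    calc l ^ (a - 1) * (1 + l) ≤ l ^ (a - 1) * (2 * l) := by gcongr; linarith
      _ = 2 * l ^ a := by rw [rpow_sub_one hl0.ne']; field_simp
      _ ≤ 2 * (2 * m) ^ a := by gcongr; linarith
      _ = 2 * 2 ^ a * m ^ a := by rw [mul_rpow zero_le_two hm]; ring
  have hint : ∀ u v, 0 ≤ u → u ≤ v → IntervalIntegrable
      (fun z : ℝ => z ^ (a - 1) * ((1 + l) / (1 + |z - l|)) ^ θ) volume u v :=
    fun u v hu huv => intervalIntegrable_rpow_sub_one_mul ha hu huv hcont.continuousOn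
  rw [← intervalIntegral.integral_add_adjacent_intervals (hint 0 (l / 2) le_rfl (by linarith))
    (hint (l / 2) m (by linarith) hml'.le)]
  have hhead := hfar (l / 2) (by linarith) (Or.inl le_rfl)
  have hnear :=
    integral_rpow_sub_one_mul_div_one_add_abs_sub_rpow_le ha hθ hl0 hml'.le hml
  have hlm : 2 ^ θ / a * (l / 2) ^ a ≤ 2 ^ θ / a * m ^ a := by gcongr
  have hnear' : 2 * 2 ^ |a - 1| / (1 - θ) * (l ^ (a - 1) * (1 + l)) ≤
      4 * 2 ^ |a - 1| * 2 ^ a / (1 - θ) * m ^ a := by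
    calc _ ≤ 2 * 2 ^ |a - 1| / (1 - θ) * (2 * 2 ^ a * m ^ a) := by gcongr
      _ = _ := by ring
  linarith

theorem integral_rpow_sub_one_mul_add_rpow_neg_mul_le {a p L m : ℝ} {g : ℝ → ℝ} (ha : 0 < a)
    (hp : 0 ≤ p) (hL : 0 < L) (hm : 0 ≤ m) (hg : ContinuousOn g (Ici 0))
    (hg₀ : ∀ z ∈ Icc 0 m, 0 ≤ g z) :
    ∫ z in 0..m, z ^ (a - 1) * ((L + z) ^ (-p) * g z) ≤
      L ^ (-p) * ∫ z in 0..m, z ^ (a - 1) * g z := by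
  rw [← intervalIntegral.integral_const_mul]
  refine intervalIntegral.integral_mono_on hm
    (intervalIntegrable_rpow_sub_one_mul ha le_rfl hm ((continuousOn_add_rpow_Ici hL _).mul hg))
    ((intervalIntegrable_rpow_sub_one_mul ha le_rfl hm hg).const_mul _) fun z hz => ?_
  rw [mul_left_comm]
  exact mul_le_mul_of_nonneg_right
    (rpow_le_rpow_of_nonpos hL (by linarith [hz.1]) (by linarith))
    (mul_nonneg (rpow_nonneg hz.1 _) (hg₀ z hz))

theorem integral_rpow_sub_one_mul_max_div_le_of_le_two_mul {a ν θ C l m R : ℝ} (ha : 0 < a)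
    (hν : 0 ≤ ν) (hθ₀ : 0 ≤ θ) (hC : 0 ≤ C) (hl : 0 ≤ l) (hm : 0 ≤ m) (hml : m ≤ 2 * l)
    (hmR : m ≤ R) (hnear : ∫ z in 0..m, z ^ (a - 1) * ((1 + l) / (1 + |z - l|)) ^ θ ≤ C * m ^ a) :
    ∫ z in 0..m, z ^ (a - 1) * ((1 + l + z) ^ (-(a + ν)) *
      (max (1 + |z - l|) (1 + l) / (1 + |z - l|)) ^ θ) ≤
      3 ^ a * C * (R / (1 + l + R)) ^ a * (1 + l) ^ (-ν) := by
  have hL : 0 < 1 + l := by linarith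
  have hmax : ∀ z ∈ uIcc 0 m, max (1 + |z - l|) (1 + l) = 1 + l := fun z hz => by
    rw [uIcc_of_le hm] at hz
    exact max_eq_right (by linarith [abs_le.mpr (⟨by linarith [hz.1], by linarith [hz.2]⟩ :
      -l ≤ z - l ∧ z - l ≤ l)])
  rw [intervalIntegral.integral_congr (g := fun z => z ^ (a - 1) *
    ((1 + l + z) ^ (-(a + ν)) * ((1 + l) / (1 + |z - l|)) ^ θ)) fun z hz => by
      simp only [hmax z hz]]
  calc _ ≤ (1 + l) ^ (-(a + ν)) * ∫ z in 0..m, z ^ (a - 1) * ((1 + l) / (1 + |z - l|)) ^ θ :=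
        integral_rpow_sub_one_mul_add_rpow_neg_mul_le ha (by linarith) hL hm
          (Continuous.continuousOn (by fun_prop (disch := intros; positivity)))
          fun z _ => by positivity
    _ ≤ (1 + l) ^ (-(a + ν)) * (C * m ^ a) := by gcongr
    _ = C * (m / (1 + l)) ^ a * (1 + l) ^ (-ν) := by
        rw [div_rpow hm hL.le, neg_add, rpow_add hL, rpow_neg hL.le]; field_simp
    _ ≤ C * (3 ^ a * (R / (1 + l + R)) ^ a) * (1 + l) ^ (-ν) := by
        gcongr; exact rpow_div_le_mul_rpow_div_add ha.le hL hm hmR (by linarith)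
    _ = 3 ^ a * C * (R / (1 + l + R)) ^ a * (1 + l) ^ (-ν) := by ring

theorem integral_rpow_sub_one_mul_max_div_le_of_two_mul_le {a ν θ l R : ℝ} (ha : 0 < a)
    (hν : 0 < ν) (hl : 0 ≤ l) (hlR : 2 * l ≤ R) :
    ∫ z in 2 * l..R, z ^ (a - 1) * ((1 + l + z) ^ (-(a + ν)) *
      (max (1 + |z - l|) (1 + l) / (1 + |z - l|)) ^ θ) ≤
      2 ^ a * (1 / a + 1 / ν) * (R / (1 + l + R)) ^ a * (1 + l) ^ (-ν) := by
  have hL : 0 < 1 + l := by linarith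
  have hone : ∀ z ∈ uIcc (2 * l) R, z ^ (a - 1) * ((1 + l + z) ^ (-(a + ν)) *
      (max (1 + |z - l|) (1 + l) / (1 + |z - l|)) ^ θ) =
      z ^ (a - 1) * (1 + l + z) ^ (-(a + ν)) := fun z hz => by
    rw [uIcc_of_le hlR] at hz
    rw [max_eq_left (by rw [abs_of_nonneg (by linarith [hz.1])]; linarith [hz.1]),
      div_self (by positivity), one_rpow, mul_one]
  rw [intervalIntegral.integral_congr hone]
  refine le_trans ?_ (integral_rpow_sub_one_mul_add_rpow_neg_le ha hν hL (by linarith))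
  exact intervalIntegral.integral_mono_interval (by linarith) hlR le_rfl
    (ae_restrict_of_forall_mem measurableSet_Ioc fun z hz =>
      mul_nonneg (rpow_nonneg hz.1.le _) (rpow_nonneg (by linarith [hz.1]) _))
    (intervalIntegrable_rpow_sub_one_mul ha le_rfl (by linarith) (continuousOn_add_rpow_Ici hL _))

theorem exists_integral_rpow_sub_one_mul_max_div_one_add_abs_sub_rpow_le {a ν θ : ℝ} (ha : 0 < a)
    (hν : 0 < ν) (hθ₀ : 0 ≤ θ) (hθ : θ < 1) :
    ∃ C, 0 < C ∧ ∀ l R : ℝ, 0 < l → 0 ≤ R →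
      ∫ z in 0..R, z ^ (a - 1) * ((1 + l + z) ^ (-(a + ν)) *
        (max (1 + |z - l|) (1 + l) / (1 + |z - l|)) ^ θ) ≤
        C * (R / (1 + l + R)) ^ a * (1 + l) ^ (-ν) := by
  obtain ⟨C₁, hC₁, hnear⟩ :=
    exists_integral_rpow_sub_one_mul_div_one_add_abs_sub_rpow_le ha hθ₀ hθ
  refine ⟨2 ^ a * (1 / a + 1 / ν) + 3 ^ a * C₁, by positivity, fun l R hl hR => ?_⟩
  have hhead : ∀ m, 0 ≤ m → m ≤ 2 * l → m ≤ R →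
      ∫ z in 0..m, z ^ (a - 1) * ((1 + l + z) ^ (-(a + ν)) *
        (max (1 + |z - l|) (1 + l) / (1 + |z - l|)) ^ θ) ≤
        3 ^ a * C₁ * (R / (1 + l + R)) ^ a * (1 + l) ^ (-ν) := fun m hm hml hmR =>
    integral_rpow_sub_one_mul_max_div_le_of_le_two_mul ha hν.le hθ₀ hC₁.le hl.le hm hml hmR
      (hnear l m hl.le hm hml)
  have hB : 0 ≤ 2 ^ a * (1 / a + 1 / ν) * ((R / (1 + l + R)) ^ a * (1 + l) ^ (-ν)) := by
    positivity
  rcases le_or_gt R (2 * l) with hR2l | hR2l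
  · nlinarith [hhead R hR hR2l le_rfl]
  have hint : ∀ u v, 0 ≤ u → u ≤ v → IntervalIntegrable (fun z : ℝ => z ^ (a - 1) *
      ((1 + l + z) ^ (-(a + ν)) * (max (1 + |z - l|) (1 + l) / (1 + |z - l|)) ^ θ)) volume u v :=
    fun u v hu huv => intervalIntegrable_rpow_sub_one_mul ha hu huv
      ((continuousOn_add_rpow_Ici (by linarith) _).mul
        (Continuous.continuousOn (by fun_prop (disch := intros; positivity))))
  rw [← intervalIntegral.integral_add_adjacent_intervals (hint 0 (2 * l) le_rfl (by linarith))
    (hint (2 * l) R (by linarith) hR2l.le)]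
  linarith [hhead (2 * l) (by linarith) le_rfl hR2l.le,
    integral_rpow_sub_one_mul_max_div_le_of_two_mul_le (θ := θ) ha hν hl.le hR2l.le]

theorem exists_integral_rpow_sub_one_mul_max_div_rpow_le {a ν θ : ℝ} (ha : 0 < a) (hν : 0 < ν)
    (hθ₀ : 0 ≤ θ) (hθ : θ < 1) :
    ∃ C, 0 < C ∧ ∀ s R : ℝ, 0 ≤ R →
      ∫ z in 0..R, z ^ (a - 1) * ((1 + |s| + z) ^ (-(a + ν)) *
        (max (1 + |z + s|) (1 + |s|) / (1 + |z + s|)) ^ θ) ≤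
        C * (R / (1 + |s| + R)) ^ a * (1 + |s|) ^ (-ν) := by
  obtain ⟨C, hC, hneg⟩ :=
    exists_integral_rpow_sub_one_mul_max_div_one_add_abs_sub_rpow_le ha hν hθ₀ hθ
  refine ⟨2 ^ a * (1 / a + 1 / ν) + C, by positivity, fun s R hR => ?_⟩
  have hX : 0 ≤ (R / (1 + |s| + R)) ^ a * (1 + |s|) ^ (-ν) := by positivity
  rcases le_or_gt 0 s with hs | hs
  · have hone : ∀ z ∈ uIcc 0 R, z ^ (a - 1) * ((1 + |s| + z) ^ (-(a + ν)) *
        (max (1 + |z + s|) (1 + |s|) / (1 + |z + s|)) ^ θ) =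
        z ^ (a - 1) * (1 + |s| + z) ^ (-(a + ν)) := fun z hz => by
      rw [uIcc_of_le hR] at hz
      have hzs : 1 + |s| ≤ 1 + |z + s| := by
        rw [abs_of_nonneg hs, abs_of_nonneg (by linarith [hz.1])]; linarith [hz.1]
      rw [max_eq_left hzs, div_self (by positivity), one_rpow, mul_one]
    rw [intervalIntegral.integral_congr hone]
    refine (integral_rpow_sub_one_mul_add_rpow_neg_le ha hν (by positivity) hR).trans ?_
    nlinarith [mul_nonneg hC.le hX]
  · obtain ⟨l, rfl⟩ : ∃ l, s = -l := ⟨-s, (neg_neg s).symm⟩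
    have hl : 0 < l := by linarith
    simp only [abs_neg, abs_of_pos hl, ← sub_eq_add_neg] at hX ⊢
    refine (hneg l R hl hR).trans ?_
    nlinarith [mul_nonneg (by positivity : (0 : ℝ) ≤ 2 ^ a * (1 / a + 1 / ν)) hX]

theorem rpow_neg_mul_rpow_neg_le {w M b₁ b₂ θ : ℝ} (hw : 0 < w) (hwM : w ≤ M) (hθ : b₁ ≤ θ) :
    w ^ (-b₁) * M ^ (-b₂) ≤ M ^ (-(b₁ + b₂)) * (M / w) ^ θ := by
  have hM : 0 < M := hw.trans_le hwM
  calc w ^ (-b₁) * M ^ (-b₂) = M ^ (-(b₁ + b₂)) * (M / w) ^ b₁ := by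
        rw [div_rpow hM.le hw.le, rpow_neg hw.le, neg_add, rpow_add hM, rpow_neg hM.le b₁]
        field_simp
    _ ≤ M ^ (-(b₁ + b₂)) * (M / w) ^ θ := by
        gcongr
        exact (one_le_div hw).mpr hwM

theorem one_add_abs_rpow_neg_mul_max_rpow_neg_le {b₁ b₂ θ s z : ℝ} (hθ : b₁ ≤ θ)
    (hb : 0 ≤ b₁ + b₂) (hz : 0 ≤ z) :
    (1 + |z + s|) ^ (-b₁) * max (1 + |z + s|) (1 + |s|) ^ (-b₂) ≤
      3 ^ (b₁ + b₂) * ((1 + |s| + z) ^ (-(b₁ + b₂)) *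
        (max (1 + |z + s|) (1 + |s|) / (1 + |z + s|)) ^ θ) := by
  set M := max (1 + |z + s|) (1 + |s|)
  have hM : 1 + |s| + z ≤ 3 * M := by
    linarith [le_max_left (1 + |z + s|) (1 + |s|), le_max_right (1 + |z + s|) (1 + |s|),
      le_abs_self (z + s), neg_abs_le s]
  have hMpow : M ^ (-(b₁ + b₂)) ≤ 3 ^ (b₁ + b₂) * (1 + |s| + z) ^ (-(b₁ + b₂)) := by
    calc M ^ (-(b₁ + b₂)) ≤ ((1 + |s| + z) / 3) ^ (-(b₁ + b₂)) :=
          rpow_le_rpow_of_nonpos (by positivity) (by linarith) (by linarith)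
      _ = 3 ^ (b₁ + b₂) * (1 + |s| + z) ^ (-(b₁ + b₂)) := by
          rw [div_rpow (by positivity) (by norm_num), rpow_neg (by norm_num : (0 : ℝ) ≤ 3),
            div_inv_eq_mul, mul_comm]
  calc _ ≤ M ^ (-(b₁ + b₂)) * (M / (1 + |z + s|)) ^ θ :=
        rpow_neg_mul_rpow_neg_le (by positivity) (le_max_left _ _) hθ
    _ ≤ 3 ^ (b₁ + b₂) * (1 + |s| + z) ^ (-(b₁ + b₂)) * (M / (1 + |z + s|)) ^ θ := by gcongr
    _ = _ := by ring

theorem exists_integral_rpow_sub_one_mul_rpow_neg_mul_max_rpow_neg_le {a ν b₁ b₂ : ℝ} (ha : 0 < a)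
    (hν : 0 < ν) (hb₁ : b₁ < 1) (hb : b₁ + b₂ = a + ν) :
    ∃ C, 0 < C ∧ ∀ s R : ℝ, 0 ≤ R →
      ∫ z in 0..R, z ^ (a - 1) * ((1 + |z + s|) ^ (-b₁) * max (1 + |z + s|) (1 + |s|) ^ (-b₂)) ≤
        C * (R / (1 + |s| + R)) ^ a * (1 + |s|) ^ (-ν) := by
  obtain ⟨C, hC, hA⟩ := exists_integral_rpow_sub_one_mul_max_div_rpow_le ha hν
    (le_max_right b₁ 0) (max_lt hb₁ zero_lt_one)
  refine ⟨3 ^ (a + ν) * C, by positivity, fun s R hR => ?_⟩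
  have hpt : ∀ z ∈ Icc 0 R,
      z ^ (a - 1) * ((1 + |z + s|) ^ (-b₁) * max (1 + |z + s|) (1 + |s|) ^ (-b₂)) ≤
      3 ^ (a + ν) * (z ^ (a - 1) * ((1 + |s| + z) ^ (-(a + ν)) *
        (max (1 + |z + s|) (1 + |s|) / (1 + |z + s|)) ^ max b₁ 0)) := fun z hz => by
    rw [← hb]
    refine (mul_le_mul_of_nonneg_left (one_add_abs_rpow_neg_mul_max_rpow_neg_le
      (le_max_left b₁ 0) (by linarith) hz.1) (rpow_nonneg hz.1 _)).trans_eq ?_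
    ring
  have hbase : Continuous fun z => 1 + |z + s| := by fun_prop
  have hcont : Continuous fun z => (1 + |z + s|) ^ (-b₁) * max (1 + |z + s|) (1 + |s|) ^ (-b₂) :=
    (hbase.rpow_const fun z => Or.inl (by positivity)).mul
      ((hbase.max continuous_const).rpow_const fun z => Or.inl (by positivity))
  have hweight : ContinuousOn (fun z => (1 + |s| + z) ^ (-(a + ν)) *
      (max (1 + |z + s|) (1 + |s|) / (1 + |z + s|)) ^ max b₁ 0) (Ici 0) :=
    (continuousOn_add_rpow_Ici (by positivity) _).mul
      (Continuous.continuousOn (by fun_prop (disch := intros; positivity)))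
  calc _ ≤ ∫ z in 0..R, 3 ^ (a + ν) * (z ^ (a - 1) * ((1 + |s| + z) ^ (-(a + ν)) *
        (max (1 + |z + s|) (1 + |s|) / (1 + |z + s|)) ^ max b₁ 0)) :=
        intervalIntegral.integral_mono_on hR
          (intervalIntegrable_rpow_sub_one_mul ha le_rfl hR hcont.continuousOn)
          ((intervalIntegrable_rpow_sub_one_mul ha le_rfl hR hweight).const_mul _) hpt
    _ ≤ 3 ^ (a + ν) * (C * (R / (1 + |s| + R)) ^ a * (1 + |s|) ^ (-ν)) := by
        rw [intervalIntegral.integral_const_mul]; gcongr; exact hA s R hR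
    _ = _ := by ring

theorem integral_div_rpow_eq_integral_rpow_sub_one_mul {a r t : ℝ} (g : ℝ → ℝ) (hr : 0 ≤ r) :
    ∫ y in (t - r)..(t + r), g y / (r - t + y) ^ (1 - a) =
      ∫ z in 0..2 * r, z ^ (a - 1) * g (z + (t - r)) := by
  have hsub := intervalIntegral.integral_comp_add_right (a := 0) (b := 2 * r)
    (fun y => g y / (r - t + y) ^ (1 - a)) (t - r)
  rw [zero_add, show 2 * r + (t - r) = t + r by ring] at hsub
  rw [← hsub]
  refine intervalIntegral.integral_congr fun z hz => ?_
  rw [uIcc_of_le (by positivity)] at hz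
  rw [show r - t + (z + (t - r)) = z by ring, div_eq_mul_inv, ← rpow_neg hz.1, neg_sub, mul_comm]

theorem div_rpow_mul_one_add_abs_sub_rpow_neg_le {a ν r t : ℝ} (ha : 0 ≤ a) (hν : 0 ≤ ν)
    (hr : 0 < r) :
    (2 * r / (1 + |t - r| + 2 * r)) ^ a * (1 + |t - r|) ^ (-ν) ≤
      2 ^ a * (r ^ a * (1 + |t| + r) ^ (-a) * (1 + |(|t| - r)|) ^ (-ν)) := by
  have hP : 0 < 1 + |t| + r := by positivity
  have hdiv : (2 * r / (1 + |t - r| + 2 * r)) ^ a ≤ 2 ^ a * (r ^ a * (1 + |t| + r) ^ (-a)) := by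
    rw [rpow_neg hP.le, ← div_eq_mul_inv, ← div_rpow hr.le hP.le,
      ← mul_rpow zero_le_two (by positivity), mul_div_assoc']
    refine rpow_le_rpow (by positivity) (div_le_div_of_nonneg_left (by positivity) hP ?_) ha
    linarith [abs_sub_abs_le_abs_sub t r, abs_of_pos hr]
  have hdist : (1 + |t - r|) ^ (-ν) ≤ (1 + |(|t| - r)|) ^ (-ν) := by
    refine rpow_le_rpow_of_nonpos (by positivity) ?_ (by linarith)
    have := abs_abs_sub_abs_le_abs_sub t r
    rw [abs_of_pos hr] at this
    linarith
  calc _ ≤ 2 ^ a * (r ^ a * (1 + |t| + r) ^ (-a)) * (1 + |(|t| - r)|) ^ (-ν) := by gcongr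
    _ = _ := by ring

theorem stmt_11 (a ν b₁ b₂ : ℝ) (ha : 0 < a) (hν : 0 < ν) (hb₁ : b₁ < 1)
    (hb : b₁ + b₂ = a + ν) :
    ∃ C : ℝ, 0 < C ∧ ∀ r t : ℝ, 0 < r →
      (∫ y in (t - r)..(t + r),
        (1 + |y|) ^ (-b₁) / (r - t + y) ^ (1 - a) * max (1 + |y|) (1 + |t - r|) ^ (-b₂)) ≤
        C * r ^ a * (1 + |t| + r) ^ (-a) * (1 + |(|t| - r)|) ^ (-ν) := by
  obtain ⟨C, hC, hbound⟩ :=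
    exists_integral_rpow_sub_one_mul_rpow_neg_mul_max_rpow_neg_le ha hν hb₁ hb
  refine ⟨2 ^ a * C, by positivity, fun r t hr => ?_⟩
  simp only [div_mul_eq_mul_div]
  rw [integral_div_rpow_eq_integral_rpow_sub_one_mul
    (fun y => (1 + |y|) ^ (-b₁) * max (1 + |y|) (1 + |t - r|) ^ (-b₂)) hr.le]
  calc _ ≤ C * ((2 * r / (1 + |t - r| + 2 * r)) ^ a * (1 + |t - r|) ^ (-ν)) := by
        rw [← mul_assoc]; exact hbound (t - r) (2 * r) (by positivity)
    _ ≤ C * (2 ^ a * (r ^ a * (1 + |t| + r) ^ (-a) * (1 + |(|t| - r)|) ^ (-ν))) :=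
        mul_le_mul_of_nonneg_left (div_rpow_mul_one_add_abs_sub_rpow_neg_le ha.le hν.le hr) hC.le
    _ = _ := by ring
end

section
/- Let $a>0$, $\nu>0$, $\kappa>2$. Then for all $(r,t)$ with $r>0$ and $t\le 2r$: $\int_{t-2r}^{t}(1+|t-\tau-r|)^{1-\kappa}\,(1+||t-\tau-r|+\tau|)^{-\nu}\,d\tau \leq C\,(1+||t|-r|)^{-\nu}$, with $C$ depending only on $\nu,\kappa$ (and where $\nu<1$). -/
/-!
Split the integral at `τ = t - r`. On the left half `|t - τ - r| + τ = t - r`, so the second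
factor is the constant `(1 + |t - r|)^(-ν)` and the first one is integrable because `κ > 2`.
On the right half, with `u = τ - (t - r)` and `b = t - r`, the integrand becomes
`(1 + u)^(1-κ) (1 + |2u + b|)^(-ν)`. For each `u` either `1 + |b| ≤ 2 (1 + |2u + b|)`, which again
gives `(1 + |b|)^(-ν)` times an integrable factor, or `1 + |b| ≤ 4 (1 + u)`, which is only needed
for `u ≤ |b|`. There the first factor is `≲ (1 + |b|)^(1-κ)` while `(1 + |2u + b|)^(-ν)` integrates
over `u ≤ |b|` to `≲ (1 + |b|)^(1-ν)` since `ν < 1`, and `(1 + |b|)^(2-κ-ν) ≤ (1 + |b|)^(-ν)`.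
Finally `||t| - r| ≤ |t - r|`.
-/

open MeasureTheory Real Set intervalIntegral

lemma Continuous.one_add_abs_rpow {g : ℝ → ℝ} (hg : Continuous g) (p : ℝ) :
    Continuous fun x => (1 + |g x|) ^ p :=
  (continuous_const.add hg.abs).rpow_const fun x =>
    Or.inl (by positivity : (0 : ℝ) < 1 + |g x|).ne'

lemma intervalIntegrable_one_add_rpow (p : ℝ) {A B : ℝ} (hA : -1 < A) (hB : -1 < B) :
    IntervalIntegrable (fun u => (1 + u) ^ p) volume A B := by
  refine ContinuousOn.intervalIntegrable ?_
  refine (continuousOn_const.add continuousOn_id).rpow_const fun u hu => Or.inl ?_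
  have : min A B ≤ u := hu.1
  have : -1 < min A B := lt_min hA hB
  exact (show (0 : ℝ) < 1 + u by linarith).ne'

lemma integral_one_add_rpow {p : ℝ} (hp : p ≠ -1) {A B : ℝ} (hA : -1 < A) (hB : -1 < B) :
    ∫ u in A..B, (1 + u) ^ p = ((1 + B) ^ (p + 1) - (1 + A) ^ (p + 1)) / (p + 1) := by
  rw [integral_comp_add_left (fun x => x ^ p), integral_rpow (Or.inr ⟨hp, ?_⟩)]
  intro h0
  rcases le_total A B with h | h
  · rw [uIcc_of_le (by linarith)] at h0; linarith [h0.1]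
  · rw [uIcc_of_ge (by linarith)] at h0; linarith [h0.1]

lemma integral_one_add_rpow_one_sub_le {κ : ℝ} (hκ : 2 < κ) {B : ℝ} (hB : 0 ≤ B) :
    ∫ u in (0 : ℝ)..B, (1 + u) ^ (1 - κ) ≤ 1 / (κ - 2) := by
  rw [integral_one_add_rpow (by linarith) (by norm_num) (by linarith), add_zero, one_rpow,
    show 1 - κ + 1 = -(κ - 2) by ring, div_neg, ← neg_div, neg_sub]
  have : 0 < κ - 2 := by linarith
  gcongr
  linarith [rpow_nonneg (show (0 : ℝ) ≤ 1 + B by linarith) (-(κ - 2))]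

lemma integral_one_add_rpow_le_of_neg_one_lt {p : ℝ} (hp : -1 < p) {B : ℝ} (hB : 0 ≤ B) :
    ∫ u in (0 : ℝ)..B, (1 + u) ^ p ≤ (1 + B) ^ (p + 1) / (p + 1) := by
  rw [integral_one_add_rpow hp.ne' (by norm_num) (by linarith), add_zero, one_rpow]
  gcongr <;> linarith

lemma integral_neg_self_comp_abs {f : ℝ → ℝ} (hf : Continuous fun w => f |w|) {s : ℝ}
    (hs : 0 ≤ s) : ∫ w in -s..s, f |w| = 2 * ∫ w in (0 : ℝ)..s, f w := by
  have hpos : ∫ w in (0 : ℝ)..s, f |w| = ∫ w in (0 : ℝ)..s, f w :=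
    integral_congr fun w hw => by
      rw [uIcc_of_le hs] at hw
      simp only [abs_of_nonneg hw.1]
  have hneg : ∫ w in -s..0, f |w| = ∫ w in (0 : ℝ)..s, f |w| := by
    simpa [abs_neg] using (integral_comp_neg (a := 0) (b := s) fun w => f |w|).symm
  rw [← integral_add_adjacent_intervals (hf.intervalIntegrable _ 0)
    (hf.intervalIntegrable 0 _), hneg, hpos]
  ring

lemma integral_one_add_abs_two_mul_sub_rpow_le {ν : ℝ} (hν : ν < 1) {s : ℝ} (hs : 0 ≤ s) :
    ∫ u in (0 : ℝ)..s, (1 + |2 * u - s|) ^ (-ν) ≤ (1 + s) ^ (1 - ν) / (1 - ν) := by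
  have hcont : Continuous fun w : ℝ => (1 + |w|) ^ (-ν) := continuous_id.one_add_abs_rpow _
  rw [integral_comp_mul_sub (fun w => (1 + |w|) ^ (-ν)) two_ne_zero,
    show 2 * 0 - s = -s by ring, show 2 * s - s = s by ring,
    integral_neg_self_comp_abs (f := fun w => (1 + w) ^ (-ν)) hcont hs, smul_eq_mul,
    inv_mul_cancel_left₀ two_ne_zero]
  simpa [neg_add_eq_sub] using
    integral_one_add_rpow_le_of_neg_one_lt (p := -ν) (by linarith) hs

lemma rpow_le_mul_rpow_of_le_mul {x y c p : ℝ} (hx : 0 < x) (hy : 0 < y) (hc : 0 < c)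
    (hp : p ≤ 0) (h : y ≤ c * x) : x ^ p ≤ c ^ (-p) * y ^ p := by
  have h' : c ^ p * x ^ p ≤ y ^ p := by
    rw [← mul_rpow hc.le hx.le]
    exact rpow_le_rpow_of_nonpos hy h hp
  calc x ^ p = c ^ (-p) * (c ^ p * x ^ p) := by
        rw [← mul_assoc, ← rpow_add hc, neg_add_cancel, rpow_zero, one_mul]
    _ ≤ c ^ (-p) * y ^ p := by gcongr

lemma one_add_le_two_mul_or_le_four_mul (s u : ℝ) :
    1 + s ≤ 2 * (1 + |2 * u - s|) ∨ 1 + s ≤ 4 * (1 + u) := by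
  rcases le_or_gt (s / 4) u with h | h
  · right; linarith
  · left; linarith [neg_abs_le (2 * u - s)]

lemma one_add_rpow_mul_one_add_abs_rpow_le_of_le_two_mul {ν κ s u : ℝ} (hν : 0 ≤ ν)
    (hs : 0 ≤ s) (hu : 0 ≤ u) (h : 1 + s ≤ 2 * (1 + |2 * u - s|)) :
    (1 + u) ^ (1 - κ) * (1 + |2 * u - s|) ^ (-ν) ≤
      2 ^ ν * (1 + s) ^ (-ν) * (1 + u) ^ (1 - κ) := by
  have := rpow_le_mul_rpow_of_le_mul (by positivity) (by positivity) two_pos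
    (neg_nonpos.mpr hν) h
  rw [neg_neg] at this
  calc (1 + u) ^ (1 - κ) * (1 + |2 * u - s|) ^ (-ν)
      ≤ (1 + u) ^ (1 - κ) * (2 ^ ν * (1 + s) ^ (-ν)) := by gcongr
    _ = 2 ^ ν * (1 + s) ^ (-ν) * (1 + u) ^ (1 - κ) := by ring

lemma one_add_rpow_mul_one_add_abs_rpow_le_add {ν κ s u : ℝ} (hν : 0 ≤ ν) (hκ : 1 ≤ κ)
    (hs : 0 ≤ s) (hu : 0 ≤ u) :
    (1 + u) ^ (1 - κ) * (1 + |2 * u - s|) ^ (-ν) ≤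
      2 ^ ν * (1 + s) ^ (-ν) * (1 + u) ^ (1 - κ) +
        4 ^ (κ - 1) * (1 + s) ^ (1 - κ) * (1 + |2 * u - s|) ^ (-ν) := by
  have hP : 0 ≤ 2 ^ ν * (1 + s) ^ (-ν) * (1 + u) ^ (1 - κ) := by positivity
  have hQ : 0 ≤ 4 ^ (κ - 1) * (1 + s) ^ (1 - κ) * (1 + |2 * u - s|) ^ (-ν) := by positivity
  rcases one_add_le_two_mul_or_le_four_mul s u with h | h
  · linarith [one_add_rpow_mul_one_add_abs_rpow_le_of_le_two_mul (κ := κ) hν hs hu h]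
  · have := rpow_le_mul_rpow_of_le_mul (by positivity) (by positivity) four_pos
      (show 1 - κ ≤ 0 by linarith) h
    rw [neg_sub] at this
    have : (1 + u) ^ (1 - κ) * (1 + |2 * u - s|) ^ (-ν) ≤
        4 ^ (κ - 1) * (1 + s) ^ (1 - κ) * (1 + |2 * u - s|) ^ (-ν) := by gcongr
    linarith

lemma integral_one_add_rpow_mul_one_add_abs_two_mul_sub_rpow_le {ν κ : ℝ} (hν : 0 ≤ ν)
    (hν1 : ν < 1) (hκ : 2 < κ) {s r : ℝ} (hs : 0 ≤ s) (hr : 0 ≤ r) :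
    ∫ u in (0 : ℝ)..r, (1 + u) ^ (1 - κ) * (1 + |2 * u - s|) ^ (-ν) ≤
      (2 ^ ν / (κ - 2) + 4 ^ (κ - 1) / (1 - ν)) * (1 + s) ^ (-ν) := by
  set f : ℝ → ℝ := fun u => (1 + u) ^ (1 - κ) * (1 + |2 * u - s|) ^ (-ν)
  set P : ℝ → ℝ := fun u => 2 ^ ν * (1 + s) ^ (-ν) * (1 + u) ^ (1 - κ)
  set Q : ℝ → ℝ := fun u => 4 ^ (κ - 1) * (1 + s) ^ (1 - κ) * (1 + |2 * u - s|) ^ (-ν)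
  have hcont : Continuous fun u : ℝ => (1 + |2 * u - s|) ^ (-ν) :=
    (continuous_const.mul continuous_id |>.sub continuous_const).one_add_abs_rpow _
  have hPi {A B : ℝ} (hA : 0 ≤ A) (hB : 0 ≤ B) : IntervalIntegrable P volume A B :=
    (intervalIntegrable_one_add_rpow _ (by linarith) (by linarith)).const_mul _
  have hQi (A B : ℝ) : IntervalIntegrable Q volume A B :=
    (hcont.const_mul _).intervalIntegrable A B
  have hfi {A B : ℝ} (hA : 0 ≤ A) (hB : 0 ≤ B) : IntervalIntegrable f volume A B :=
    (intervalIntegrable_one_add_rpow _ (by linarith) (by linarith)).mul_continuousOn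
      hcont.continuousOn
  have hPr : ∫ u in (0 : ℝ)..r, P u ≤ 2 ^ ν * (1 + s) ^ (-ν) * (1 / (κ - 2)) := by
    rw [intervalIntegral.integral_const_mul]
    gcongr
    exact integral_one_add_rpow_one_sub_le hκ hr
  have hQs : ∫ u in (0 : ℝ)..s, Q u ≤
      4 ^ (κ - 1) * (1 + s) ^ (1 - κ) * ((1 + s) ^ (1 - ν) / (1 - ν)) := by
    rw [intervalIntegral.integral_const_mul]
    gcongr
    exact integral_one_add_abs_two_mul_sub_rpow_le hν1 hs
  have hexp : (1 + s) ^ (1 - κ) * (1 + s) ^ (1 - ν) ≤ (1 + s) ^ (-ν) := by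
    rw [← rpow_add (by linarith)]
    exact rpow_le_rpow_of_exponent_le (by linarith) (by linarith)
  have hc : 0 ≤ 4 ^ (κ - 1) / (1 - ν) := div_nonneg (by positivity) (by linarith)
  set m := min r s
  have hm0 : 0 ≤ m := le_min hr hs
  calc ∫ u in (0 : ℝ)..r, f u = (∫ u in (0 : ℝ)..m, f u) + ∫ u in m..r, f u :=
        (integral_add_adjacent_intervals (hfi le_rfl hm0) (hfi hm0 hr)).symm
    _ ≤ ((∫ u in (0 : ℝ)..m, P u) + ∫ u in (0 : ℝ)..m, Q u) + ∫ u in m..r, P u := by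
        rw [← integral_add (hPi le_rfl hm0) (hQi 0 m)]
        gcongr
        · exact integral_mono_on hm0 (hfi le_rfl hm0) ((hPi le_rfl hm0).add (hQi 0 m))
            fun u hu => one_add_rpow_mul_one_add_abs_rpow_le_add hν (by linarith) hs hu.1
        · refine integral_mono_on_of_le_Ioo (min_le_left r s) (hfi hm0 hr) (hPi hm0 hr)
            fun u hu => ?_
          have hsu : s < u := (min_lt_iff.mp hu.1).resolve_left hu.2.not_gt
          exact one_add_rpow_mul_one_add_abs_rpow_le_of_le_two_mul hν hs (by linarith)
            (by linarith [le_abs_self (2 * u - s)])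
    _ ≤ ((∫ u in (0 : ℝ)..m, P u) + ∫ u in m..r, P u) + ∫ u in (0 : ℝ)..s, Q u := by
        have := integral_mono_interval le_rfl hm0 (min_le_right r s)
          (Filter.Eventually.of_forall fun u => by positivity) (hQi 0 s)
        linarith
    _ = (∫ u in (0 : ℝ)..r, P u) + ∫ u in (0 : ℝ)..s, Q u := by
        rw [integral_add_adjacent_intervals (hPi le_rfl hm0) (hPi hm0 hr)]
    _ ≤ 2 ^ ν * (1 + s) ^ (-ν) * (1 / (κ - 2)) +
          4 ^ (κ - 1) * (1 + s) ^ (1 - κ) * ((1 + s) ^ (1 - ν) / (1 - ν)) :=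
        add_le_add hPr hQs
    _ = 2 ^ ν / (κ - 2) * (1 + s) ^ (-ν) +
          4 ^ (κ - 1) / (1 - ν) * ((1 + s) ^ (1 - κ) * (1 + s) ^ (1 - ν)) := by ring
    _ ≤ 2 ^ ν / (κ - 2) * (1 + s) ^ (-ν) + 4 ^ (κ - 1) / (1 - ν) * (1 + s) ^ (-ν) := by
        gcongr
    _ = (2 ^ ν / (κ - 2) + 4 ^ (κ - 1) / (1 - ν)) * (1 + s) ^ (-ν) := by ring

lemma integral_one_add_rpow_mul_one_add_abs_two_mul_add_rpow_le {ν κ : ℝ} (hν : 0 ≤ ν)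
    (hν1 : ν < 1) (hκ : 2 < κ) (b : ℝ) {r : ℝ} (hr : 0 ≤ r) :
    ∫ u in (0 : ℝ)..r, (1 + u) ^ (1 - κ) * (1 + |2 * u + b|) ^ (-ν) ≤
      (2 ^ ν / (κ - 2) + 4 ^ (κ - 1) / (1 - ν)) * (1 + |b|) ^ (-ν) := by
  have hcont (c : ℝ) : Continuous fun u : ℝ => (1 + |2 * u + c|) ^ (-ν) :=
    (continuous_const.mul continuous_id |>.add continuous_const).one_add_abs_rpow _
  refine le_trans (integral_mono_on hr ?_ ?_ fun u hu => ?_)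
    (integral_one_add_rpow_mul_one_add_abs_two_mul_sub_rpow_le hν hν1 hκ (abs_nonneg b) hr)
  · exact (intervalIntegrable_one_add_rpow _ (by norm_num) (by linarith)).mul_continuousOn
      (hcont b).continuousOn
  · simpa [sub_eq_add_neg] using
      (intervalIntegrable_one_add_rpow (1 - κ) (by norm_num) (by linarith)).mul_continuousOn
      (hcont (-|b|)).continuousOn
  · -- for `u ≥ 0` the worst case is `b ≤ 0`
    have h : |(2 * u - |b|)| ≤ |2 * u + b| := by
      simpa [abs_of_nonneg (by linarith [hu.1] : (0 : ℝ) ≤ 2 * u)] using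
        abs_abs_sub_abs_le_abs_sub (2 * u) (-b)
    have : 0 ≤ 1 + u := by linarith [hu.1]
    exact mul_le_mul_of_nonneg_left
      (rpow_le_rpow_of_nonpos (by positivity) (by linarith) (neg_nonpos.mpr hν)) (by positivity)

lemma integral_sub_add_eq_integral_comp_sub_add_integral_comp_add {F : ℝ → ℝ}
    (hF : Continuous F) (c r : ℝ) :
    ∫ τ in c - r..c + r, F τ =
      (∫ u in (0 : ℝ)..r, F (c - u)) + ∫ u in (0 : ℝ)..r, F (c + u) := by
  rw [integral_comp_sub_left, integral_comp_add_left, sub_zero, add_zero,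
    integral_add_adjacent_intervals (hF.intervalIntegrable _ _) (hF.intervalIntegrable _ _)]

lemma integral_sub_two_mul_eq (κ ν : ℝ) {r : ℝ} (hr : 0 ≤ r) (t : ℝ) :
    ∫ τ in (t - 2 * r)..t, (1 + |t - τ - r|) ^ (1 - κ) * (1 + |(|t - τ - r| + τ)|) ^ (-ν) =
      (∫ u in (0 : ℝ)..r, (1 + u) ^ (1 - κ)) * (1 + |t - r|) ^ (-ν) +
        ∫ u in (0 : ℝ)..r, (1 + u) ^ (1 - κ) * (1 + |2 * u + (t - r)|) ^ (-ν) := by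
  set F : ℝ → ℝ := fun τ =>
    (1 + |t - τ - r|) ^ (1 - κ) * (1 + |(|t - τ - r| + τ)|) ^ (-ν)
  have hF : Continuous F := by
    apply Continuous.mul <;> apply Continuous.one_add_abs_rpow <;> fun_prop
  have hleft : EqOn (fun u => F (t - r - u))
      (fun u => (1 + u) ^ (1 - κ) * (1 + |t - r|) ^ (-ν)) (uIcc 0 r) := fun u hu => by
    rw [uIcc_of_le hr] at hu
    simp only [F, show t - (t - r - u) - r = u by ring, abs_of_nonneg hu.1,
      show u + (t - r - u) = t - r by ring]
  have hright : EqOn (fun u => F (t - r + u))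
      (fun u => (1 + u) ^ (1 - κ) * (1 + |2 * u + (t - r)|) ^ (-ν)) (uIcc 0 r) := fun u hu => by
    rw [uIcc_of_le hr] at hu
    simp only [F, show t - (t - r + u) - r = -u by ring, abs_neg, abs_of_nonneg hu.1,
      show u + (t - r + u) = 2 * u + (t - r) by ring]
  have hsplit := integral_sub_add_eq_integral_comp_sub_add_integral_comp_add hF (t - r) r
  rw [sub_sub, ← two_mul, sub_add_cancel] at hsplit
  rw [hsplit, integral_congr hleft, integral_congr hright, intervalIntegral.integral_mul_const]

theorem stmt_12_general (ν κ : ℝ) (hν : 0 < ν) (hν1 : ν < 1) (hκ : 2 < κ) :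
    ∃ C : ℝ, 0 < C ∧ ∀ r t : ℝ, 0 < r → t ≤ 2 * r →
      (∫ τ in (t - 2 * r)..t,
        (1 + |t - τ - r|) ^ (1 - κ) * (1 + |(|t - τ - r| + τ)|) ^ (-ν)) ≤
        C * (1 + |(|t| - r)|) ^ (-ν) := by
  have hκ2 : 0 < κ - 2 := by linarith
  have hν2 : 0 < 1 - ν := by linarith
  refine ⟨(1 + 2 ^ ν) / (κ - 2) + 4 ^ (κ - 1) / (1 - ν), by positivity, fun r t hr _ => ?_⟩
  have hdecay := integral_one_add_rpow_one_sub_le hκ hr.le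
  have hweight : (1 + |t - r|) ^ (-ν) ≤ (1 + |(|t| - r)|) ^ (-ν) := by
    have := abs_abs_sub_abs_le_abs_sub t r
    rw [abs_of_pos hr] at this
    exact rpow_le_rpow_of_nonpos (by positivity) (by linarith) (neg_nonpos.mpr hν.le)
  rw [integral_sub_two_mul_eq κ ν hr.le t]
  calc (∫ u in (0 : ℝ)..r, (1 + u) ^ (1 - κ)) * (1 + |t - r|) ^ (-ν) +
        ∫ u in (0 : ℝ)..r, (1 + u) ^ (1 - κ) * (1 + |2 * u + (t - r)|) ^ (-ν)
      ≤ 1 / (κ - 2) * (1 + |t - r|) ^ (-ν) +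
          (2 ^ ν / (κ - 2) + 4 ^ (κ - 1) / (1 - ν)) * (1 + |t - r|) ^ (-ν) := by
        gcongr
        exact integral_one_add_rpow_mul_one_add_abs_two_mul_add_rpow_le hν.le hν1 hκ _ hr.le
    _ = ((1 + 2 ^ ν) / (κ - 2) + 4 ^ (κ - 1) / (1 - ν)) * (1 + |t - r|) ^ (-ν) := by ring
    _ ≤ ((1 + 2 ^ ν) / (κ - 2) + 4 ^ (κ - 1) / (1 - ν)) * (1 + |(|t| - r)|) ^ (-ν) := by
        gcongr

theorem stmt_12 (a ν κ : ℝ) (ha : 0 < a) (hν : 0 < ν) (hν1 : ν < 1) (hκ : 2 < κ) :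
    ∃ C : ℝ, 0 < C ∧ ∀ r t : ℝ, 0 < r → t ≤ 2 * r →
      (∫ τ in (t - 2 * r)..t,
        (1 + |t - τ - r|) ^ (1 - κ) * (1 + |(|t - τ - r| + τ)|) ^ (-ν)) ≤
        C * (1 + |(|t| - r)|) ^ (-ν) :=
  stmt_12_general ν κ hν hν1 hκ
end

section
/- Let $a\in\{1/2,1\}$, $m=(n-1)/2-a$ for some $n\ge 4$, $p$ with $p_n<p<1+4/(n-1)$, $k$ with $2/(p-1)\le k<\min((a+m)p-1,a+m+1/p)$, $\nu=k-m-a$, and $\theta=\min((a+m)(p-1)-1,\,(k-m)p-1,\,k-m-1)$. If $k>m+1$ then $\theta>0$, and for every $\tau\le 0$: $\int_0^\infty r^{2a+2m+2p(1-m)}(1+r)^{-2p}\,(1+|\tau|+r)^{-2ap}(1+||\tau|-r|)^{-2\nu p}\,dr \leq C\,(1+|\tau|)^{-2\theta-2}$ for a constant $C$ independent of $\tau$. -/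
/-!
Write `T = |τ|`, `R = 1 + T`, and split `(0, ∞)` at `R / 2` and `2 R`. On `(0, R / 2]` one has
`1 + |T - r| ≥ R / 2`, so the last two factors give `R ^ (-2 (a + ν) p)`, while
`∫₀^R r ^ A (1 + r) ^ (-2p)` grows only like `R ^ ρ` for any `ρ > 0` above `A - 2p + 1`.
On `(R / 2, 2 R]` all factors but `(1 + |T - r|) ^ (-2νp)` are comparable to powers of `R`, and
that factor, weakened to `(1 + |T - r|) ^ (-γ)` with `γ < 1`, integrates to `O(R ^ (1 - γ))`.
Beyond `2 R` the integrand is `O(r ^ E)` with `E < -1`. The constraints on `p` and `k` make each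
of the three resulting powers of `R` at most `R ^ (-2θ - 2)`.
-/

open MeasureTheory Real Set

lemma integral_one_add_rpow_neg_le {γ L : ℝ} (hγ : γ < 1) :
    ∫ s in (0:ℝ)..L, (1 + s) ^ (-γ) ≤ (1 + L) ^ (1 - γ) / (1 - γ) := by
  rw [intervalIntegral.integral_comp_add_left (fun u => u ^ (-γ)),
    integral_rpow (Or.inl (by linarith)), add_zero, one_rpow, neg_add_eq_sub]
  gcongr
  linarith

lemma integral_one_add_abs_rpow_neg_le {γ L : ℝ} (hγ : γ < 1) (hL : 0 ≤ L) :
    ∫ s in -L..L, (1 + |s|) ^ (-γ) ≤ 2 * ((1 + L) ^ (1 - γ) / (1 - γ)) := by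
  have hcont : Continuous fun s : ℝ => (1 + |s|) ^ (-γ) :=
    (continuous_const.add continuous_abs).rpow_const fun s =>
      Or.inl (by positivity : (0:ℝ) < 1 + |s|).ne'
  have hneg : ∫ s in -L..0, (1 + |s|) ^ (-γ) = ∫ s in (0:ℝ)..L, (1 + |s|) ^ (-γ) := by
    simpa using (intervalIntegral.integral_comp_neg (a := 0) (b := L)
      (fun s : ℝ => (1 + |s|) ^ (-γ))).symm
  have hpos : ∫ s in (0:ℝ)..L, (1 + |s|) ^ (-γ) = ∫ s in (0:ℝ)..L, (1 + s) ^ (-γ) :=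
    intervalIntegral.integral_congr fun s hs => by
      rw [uIcc_of_le hL] at hs
      simp only [abs_of_nonneg hs.1]
  rw [← intervalIntegral.integral_add_adjacent_intervals (b := 0) (hcont.intervalIntegrable _ _)
    (hcont.intervalIntegrable _ _), hneg, hpos, ← two_mul]
  gcongr
  exact integral_one_add_rpow_neg_le hγ

lemma setIntegral_Ioc_one_add_abs_sub_rpow_neg_le {γ L T X Y : ℝ} (hγ : γ < 1) (hXY : X ≤ Y)
    (hX : T - L ≤ X) (hY : Y ≤ T + L) :
    ∫ r in Ioc X Y, (1 + |T - r|) ^ (-γ) ≤ 2 * ((1 + L) ^ (1 - γ) / (1 - γ)) := by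
  have hcont : Continuous fun s : ℝ => (1 + |s|) ^ (-γ) :=
    (continuous_const.add continuous_abs).rpow_const fun s =>
      Or.inl (by positivity : (0:ℝ) < 1 + |s|).ne'
  calc ∫ r in Ioc X Y, (1 + |T - r|) ^ (-γ)
      = ∫ s in (X - T)..(Y - T), (1 + |s|) ^ (-γ) := by
        rw [← intervalIntegral.integral_of_le hXY,
          ← intervalIntegral.integral_comp_sub_right (fun s => (1 + |s|) ^ (-γ)) T]
        simp only [abs_sub_comm]
    _ ≤ ∫ s in -L..L, (1 + |s|) ^ (-γ) :=
        intervalIntegral.integral_mono_interval (by linarith) (by linarith) (by linarith)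
          (Filter.Eventually.of_forall fun s => by positivity) (hcont.intervalIntegrable _ _)
    _ ≤ 2 * ((1 + L) ^ (1 - γ) / (1 - γ)) :=
        integral_one_add_abs_rpow_neg_le hγ (by linarith)

section
variable {A β : ℝ}

lemma rpow_mul_one_add_rpow_neg_le_rpow (hβ : 0 ≤ β) {r : ℝ} (hr : 0 ≤ r) :
    r ^ A * (1 + r) ^ (-β) ≤ r ^ A :=
  mul_le_of_le_one_right (by positivity)
    (rpow_le_one_of_one_le_of_nonpos (by linarith) (by linarith))

lemma integrableOn_rpow_mul_one_add_rpow_neg (hA : -1 < A) (hβ : 0 ≤ β) (M : ℝ) :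
    IntegrableOn (fun r : ℝ => r ^ A * (1 + r) ^ (-β)) (Ioc 0 M) := by
  refine Integrable.mono' (intervalIntegral.intervalIntegrable_rpow' hA).1 ?_ ?_
  · refine ContinuousOn.aestronglyMeasurable ?_ measurableSet_Ioc
    refine (continuousOn_id.rpow_const fun r hr => Or.inl hr.1.ne').mul ?_
    exact (continuous_const.add continuous_id).continuousOn.rpow_const
      fun r hr => Or.inl (by linarith [hr.1] : (0:ℝ) < 1 + r).ne'
  · filter_upwards [ae_restrict_mem measurableSet_Ioc] with r hr
    rw [norm_of_nonneg (by have := hr.1.le; positivity)]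
    exact rpow_mul_one_add_rpow_neg_le_rpow hβ hr.1.le

lemma setIntegral_Ioc_rpow_mul_one_add_rpow_neg_le (hA : -1 < A) (hβ : 0 ≤ β) {ρ M : ℝ}
    (hρ : 0 < ρ) (hAρ : A - β + 1 ≤ ρ) (hM : 1 ≤ M) :
    ∫ r in Ioc 0 M, r ^ A * (1 + r) ^ (-β) ≤ (1 / (A + 1) + 1 / ρ) * M ^ ρ := by
  have hint := integrableOn_rpow_mul_one_add_rpow_neg hA hβ M
  have hsmall : ∫ r in Ioc 0 1, r ^ A * (1 + r) ^ (-β) ≤ 1 / (A + 1) := by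
    calc ∫ r in Ioc 0 1, r ^ A * (1 + r) ^ (-β) ≤ ∫ r in Ioc 0 1, r ^ A :=
          setIntegral_mono_on (hint.mono_set (Ioc_subset_Ioc_right hM))
            (intervalIntegral.intervalIntegrable_rpow' hA).1 measurableSet_Ioc
            fun r hr => rpow_mul_one_add_rpow_neg_le_rpow hβ hr.1.le
      _ = 1 / (A + 1) := by
          rw [← intervalIntegral.integral_of_le zero_le_one, integral_rpow (Or.inl hA),
            one_rpow, zero_rpow (by linarith), sub_zero]
  have hlarge : ∫ r in Ioc 1 M, r ^ A * (1 + r) ^ (-β) ≤ M ^ ρ / ρ := by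
    calc ∫ r in Ioc 1 M, r ^ A * (1 + r) ^ (-β) ≤ ∫ r in Ioc 1 M, r ^ (ρ - 1) := by
          refine setIntegral_mono_on (hint.mono_set (Ioc_subset_Ioc_left zero_le_one))
            (intervalIntegral.intervalIntegrable_rpow' (by linarith)).1 measurableSet_Ioc
            fun r hr => ?_
          have hr0 : 0 < r := by linarith [hr.1]
          calc r ^ A * (1 + r) ^ (-β) ≤ r ^ A * r ^ (-β) :=
                mul_le_mul_of_nonneg_left
                  (rpow_le_rpow_of_nonpos hr0 (by linarith) (by linarith)) (by positivity)
            _ = r ^ (A - β) := by rw [← rpow_add hr0, sub_eq_add_neg]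
            _ ≤ r ^ (ρ - 1) := rpow_le_rpow_of_exponent_le hr.1.le (by linarith)
      _ ≤ M ^ ρ / ρ := by
          rw [← intervalIntegral.integral_of_le hM, integral_rpow (Or.inl (by linarith)),
            sub_add_cancel, one_rpow]
          gcongr
          linarith
  have hMρ : 1 ≤ M ^ ρ := one_le_rpow hM hρ.le
  rw [← Ioc_union_Ioc_eq_Ioc zero_le_one hM, setIntegral_union (Ioc_disjoint_Ioc_of_le le_rfl)
    measurableSet_Ioc (hint.mono_set (Ioc_subset_Ioc_right hM))
    (hint.mono_set (Ioc_subset_Ioc_left zero_le_one))]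
  have hA1 : 0 ≤ 1 / (A + 1) := one_div_nonneg.2 (by linarith)
  calc _ ≤ 1 / (A + 1) + M ^ ρ / ρ := add_le_add hsmall hlarge
    _ ≤ 1 / (A + 1) * M ^ ρ + M ^ ρ / ρ := by gcongr; exact le_mul_of_one_le_right hA1 hMρ
    _ = (1 / (A + 1) + 1 / ρ) * M ^ ρ := by ring

end

lemma setIntegral_mono_on_of_nonneg {f g : ℝ → ℝ} {s : Set ℝ} (hs : MeasurableSet s)
    (hg : IntegrableOn g s) (hf : ∀ x ∈ s, 0 ≤ f x) (hfg : ∀ x ∈ s, f x ≤ g x) :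
    ∫ x in s, f x ≤ ∫ x in s, g x :=
  integral_mono_of_nonneg ((ae_restrict_iff' hs).2 (ae_of_all _ hf)) hg
    ((ae_restrict_iff' hs).2 (ae_of_all _ hfg))

lemma setIntegral_Ioi_eq_add_add {f : ℝ → ℝ} {a b c : ℝ} (hab : a ≤ b) (hbc : b ≤ c)
    (hf : IntegrableOn f (Ioi a)) :
    ∫ x in Ioi a, f x =
      (∫ x in Ioc a b, f x) + (∫ x in Ioc b c, f x) + ∫ x in Ioi c, f x := by
  have hfb : IntegrableOn f (Ioi b) := hf.mono_set (Ioi_subset_Ioi hab)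
  rw [← Ioc_union_Ioi_eq_Ioi hab, setIntegral_union Ioc_disjoint_Ioi_same measurableSet_Ioi
    (hf.mono_set Ioc_subset_Ioi_self) hfb, ← Ioc_union_Ioi_eq_Ioi hbc,
    setIntegral_union Ioc_disjoint_Ioi_same measurableSet_Ioi
    (hfb.mono_set Ioc_subset_Ioi_self) (hfb.mono_set (Ioi_subset_Ioi hbc)), add_assoc]

lemma half_rpow_neg {x : ℝ} (hx : 0 ≤ x) (d : ℝ) : (x / 2) ^ (-d) = 2 ^ d * x ^ (-d) := by
  rw [div_rpow hx zero_le_two, rpow_neg zero_le_two, div_inv_eq_mul, mul_comm]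

lemma rpow_le_two_rpow_abs_mul_rpow_s18 {x r : ℝ} (A : ℝ) (hx : 0 < x) (h₁ : x / 2 ≤ r)
    (h₂ : r ≤ 2 * x) : r ^ A ≤ 2 ^ |A| * x ^ A := by
  rcases le_total 0 A with hA | hA
  · calc r ^ A ≤ (2 * x) ^ A := rpow_le_rpow (by linarith) h₂ hA
      _ = 2 ^ A * x ^ A := mul_rpow zero_le_two hx.le
      _ ≤ 2 ^ |A| * x ^ A := by gcongr; exacts [one_le_two, le_abs_self A]
  · calc r ^ A ≤ (x / 2) ^ A := rpow_le_rpow_of_nonpos (by linarith) h₁ hA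
      _ = 2 ^ (-A) * x ^ A := by rw [← neg_neg A, half_rpow_neg hx.le, neg_neg]
      _ ≤ 2 ^ |A| * x ^ A := by gcongr; exacts [one_le_two, neg_le_abs A]

noncomputable def radialWeight (A β c d T r : ℝ) : ℝ :=
  r ^ A * (1 + r) ^ (-β) * (1 + T + r) ^ (-c) * (1 + |T - r|) ^ (-d)

section
variable {A β c d σ T r : ℝ}

lemma radialWeight_nonneg (hT : 0 ≤ T) (hr : 0 ≤ r) : 0 ≤ radialWeight A β c d T r := by
  unfold radialWeight; positivity

lemma radialWeight_le_of_le_half (hc : 0 ≤ c) (hd : 0 ≤ d) (hT : 0 ≤ T) (hr : 0 ≤ r)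
    (hrT : r ≤ (1 + T) / 2) :
    radialWeight A β c d T r ≤
      r ^ A * (1 + r) ^ (-β) * ((1 + T) ^ (-c) * (2 ^ d * (1 + T) ^ (-d))) := by
  rw [radialWeight, mul_assoc _ ((1 + T + r) ^ (-c)), ← half_rpow_neg (by linarith)]
  gcongr ?_ * (?_ * ?_)
  · exact rpow_le_rpow_of_nonpos (by linarith) (by linarith) (by linarith)
  · exact rpow_le_rpow_of_nonpos (by linarith) (by linarith [le_abs_self (T - r)]) (by linarith)

lemma radialWeight_le_of_mem_Ioc (hβ : 0 ≤ β) (hc : 0 ≤ c) {γ : ℝ} (hγ : γ ≤ d)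
    (hT : 0 ≤ T) (hr : r ∈ Ioc ((1 + T) / 2) (2 * (1 + T))) :
    radialWeight A β c d T r ≤ 2 ^ |A| * (1 + T) ^ A * (2 ^ β * (1 + T) ^ (-β)) *
      (1 + T) ^ (-c) * (1 + |T - r|) ^ (-γ) := by
  have hR : 0 < 1 + T := by linarith
  rw [radialWeight, ← half_rpow_neg hR.le]
  have h₀ : 0 < r := by linarith [hr.1]
  gcongr ?_ * ?_ * ?_ * ?_
  · exact rpow_le_two_rpow_abs_mul_rpow_s18 A hR hr.1.le hr.2
  · exact rpow_le_rpow_of_nonpos (by linarith) (by linarith [hr.1]) (by linarith)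
  · exact rpow_le_rpow_of_nonpos hR (by linarith) (by linarith)
  · exact rpow_le_rpow_of_exponent_le (by linarith [abs_nonneg (T - r)]) (by linarith)

lemma radialWeight_le_of_two_mul_lt (hβ : 0 ≤ β) (hc : 0 ≤ c) (hd : 0 ≤ d) (hT : 0 ≤ T)
    (hr : 2 * (1 + T) < r) :
    radialWeight A β c d T r ≤ 2 ^ d * r ^ (A - β - c - d) := by
  have h₀ : 0 < r := by linarith
  calc radialWeight A β c d T r ≤ r ^ A * r ^ (-β) * r ^ (-c) * (r / 2) ^ (-d) := by
        rw [radialWeight]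
        gcongr ?_ * ?_ * ?_ * ?_
        · exact rpow_le_rpow_of_nonpos h₀ (by linarith) (by linarith)
        · exact rpow_le_rpow_of_nonpos h₀ (by linarith) (by linarith)
        · refine rpow_le_rpow_of_nonpos (by linarith) ?_ (by linarith)
          rw [abs_sub_comm, abs_of_pos (by linarith)]
          linarith
    _ = 2 ^ d * r ^ (A - β - c - d) := by
        rw [half_rpow_neg h₀.le, sub_eq_add_neg, sub_eq_add_neg, sub_eq_add_neg,
          rpow_add h₀, rpow_add h₀, rpow_add h₀]
        ring

lemma exists_setIntegral_Ioc_zero_radialWeight_le (hA : -1 < A) (hβ : 0 ≤ β) (hc : 0 ≤ c)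
    (hd : 0 ≤ d) (hσ : σ < c + d) (hσA : σ + A + 1 ≤ β + c + d) :
    ∃ C, ∀ T, 0 ≤ T →
      ∫ r in Ioc 0 ((1 + T) / 2), radialWeight A β c d T r ≤ C * (1 + T) ^ (-σ) := by
  refine ⟨(1 / (A + 1) + 1 / (c + d - σ)) * 2 ^ d, fun T hT => ?_⟩
  have hR : 0 < 1 + T := by linarith
  set K := (1 + T) ^ (-c) * (2 ^ d * (1 + T) ^ (-d))
  have hf := integrableOn_rpow_mul_one_add_rpow_neg hA hβ (1 + T)
  have hexp : (1 + T) ^ (c + d - σ) * (1 + T) ^ (-c) * (1 + T) ^ (-d) = (1 + T) ^ (-σ) := by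
    rw [← rpow_add hR, ← rpow_add hR]
    ring_nf
  -- enlarging the range to `(0, 1 + T]` makes the hypothesis `1 ≤ M` below hold
  calc ∫ r in Ioc 0 ((1 + T) / 2), radialWeight A β c d T r
      ≤ ∫ r in Ioc 0 ((1 + T) / 2), r ^ A * (1 + r) ^ (-β) * K :=
        setIntegral_mono_on_of_nonneg measurableSet_Ioc
          ((hf.mono_set (Ioc_subset_Ioc_right (by linarith))).mul_const K)
          (fun r hr => radialWeight_nonneg hT hr.1.le)
          fun r hr => radialWeight_le_of_le_half hc hd hT hr.1.le hr.2
    _ ≤ ∫ r in Ioc 0 (1 + T), r ^ A * (1 + r) ^ (-β) * K :=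
        setIntegral_mono_set (hf.mul_const K)
          ((ae_restrict_iff' measurableSet_Ioc).2 (ae_of_all _ fun r hr => by
            have := hr.1.le; positivity))
          (Ioc_subset_Ioc_right (by linarith)).eventuallyLE
    _ = (∫ r in Ioc 0 (1 + T), r ^ A * (1 + r) ^ (-β)) * K := integral_mul_const K _
    _ ≤ (1 / (A + 1) + 1 / (c + d - σ)) * (1 + T) ^ (c + d - σ) * K := by
        gcongr
        exact setIntegral_Ioc_rpow_mul_one_add_rpow_neg_le hA hβ (by linarith) (by linarith)
          (by linarith)
    _ = (1 / (A + 1) + 1 / (c + d - σ)) * 2 ^ d * (1 + T) ^ (-σ) := by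
        rw [← hexp]
        ring

lemma exists_setIntegral_Ioc_radialWeight_le (hβ : 0 ≤ β) (hc : 0 ≤ c)
    (hσA : σ + A < β + c) (hσd : σ + A + 1 ≤ β + c + d) :
    ∃ C, ∀ T, 0 ≤ T →
      ∫ r in Ioc ((1 + T) / 2) (2 * (1 + T)), radialWeight A β c d T r ≤
        C * (1 + T) ^ (-σ) := by
  set γ := σ + A + 1 - β - c with hγ_def
  have hγ : 0 < 1 - γ := by linarith
  refine ⟨2 ^ |A| * 2 ^ β * (2 * (3 ^ (1 - γ) / (1 - γ))), fun T hT => ?_⟩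
  have hR : 0 < 1 + T := by linarith
  set B := 2 ^ |A| * (1 + T) ^ A * (2 ^ β * (1 + T) ^ (-β)) * (1 + T) ^ (-c)
  have hexp : (1 + T) ^ A * (1 + T) ^ (-β) * (1 + T) ^ (-c) * (1 + T) ^ (1 - γ)
      = (1 + T) ^ (-σ) := by
    rw [← rpow_add hR, ← rpow_add hR, ← rpow_add hR, hγ_def]
    ring_nf
  have hint : IntegrableOn (fun r => (1 + |T - r|) ^ (-γ)) (Ioc ((1 + T) / 2) (2 * (1 + T))) :=
    (Continuous.rpow_const (continuous_const.add (continuous_const.sub continuous_id).abs)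
      fun r => Or.inl (by positivity : (0:ℝ) < 1 + |T - r|).ne').integrableOn_Ioc
  calc ∫ r in Ioc ((1 + T) / 2) (2 * (1 + T)), radialWeight A β c d T r
      ≤ ∫ r in Ioc ((1 + T) / 2) (2 * (1 + T)), B * (1 + |T - r|) ^ (-γ) :=
        setIntegral_mono_on_of_nonneg measurableSet_Ioc (hint.const_mul B)
          (fun r hr => radialWeight_nonneg hT (by linarith [hr.1]))
          fun r hr => radialWeight_le_of_mem_Ioc hβ hc (by linarith) hT hr
    _ = B * ∫ r in Ioc ((1 + T) / 2) (2 * (1 + T)), (1 + |T - r|) ^ (-γ) :=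
        integral_const_mul B _
    _ ≤ B * (2 * ((1 + 2 * (1 + T)) ^ (1 - γ) / (1 - γ))) := by
        gcongr
        exact setIntegral_Ioc_one_add_abs_sub_rpow_neg_le (by linarith) (by linarith)
          (by linarith) (by linarith)
    _ ≤ B * (2 * ((3 * (1 + T)) ^ (1 - γ) / (1 - γ))) := by
        gcongr
        linarith
    _ = 2 ^ |A| * 2 ^ β * (2 * (3 ^ (1 - γ) / (1 - γ))) * (1 + T) ^ (-σ) := by
        rw [← hexp, mul_rpow zero_le_three hR.le]
        ring

lemma exists_setIntegral_Ioi_radialWeight_le (hβ : 0 ≤ β) (hc : 0 ≤ c) (hd : 0 ≤ d)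
    (hσ : σ + A + 1 ≤ β + c + d) (hE : A + 1 < β + c + d) :
    ∃ C, ∀ T, 0 ≤ T →
      ∫ r in Ioi (2 * (1 + T)), radialWeight A β c d T r ≤ C * (1 + T) ^ (-σ) := by
  set E := A - β - c - d
  have hE' : E < -1 := by linarith
  refine ⟨2 ^ d * 2 ^ (E + 1) / (-(E + 1)), fun T hT => ?_⟩
  have hR : 0 < 1 + T := by linarith
  have h2R : 0 < 2 * (1 + T) := by linarith
  calc ∫ r in Ioi (2 * (1 + T)), radialWeight A β c d T r
      ≤ ∫ r in Ioi (2 * (1 + T)), 2 ^ d * r ^ E :=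
        setIntegral_mono_on_of_nonneg measurableSet_Ioi
          ((integrableOn_Ioi_rpow_of_lt hE' h2R).const_mul _)
          (fun r hr => radialWeight_nonneg hT (by linarith [mem_Ioi.1 hr]))
          fun r hr => radialWeight_le_of_two_mul_lt hβ hc hd hT hr
    _ = 2 ^ d * 2 ^ (E + 1) / (-(E + 1)) * (1 + T) ^ (E + 1) := by
        rw [integral_const_mul, integral_Ioi_rpow_of_lt hE' h2R, mul_rpow zero_le_two hR.le]
        field_simp
    _ ≤ 2 ^ d * 2 ^ (E + 1) / (-(E + 1)) * (1 + T) ^ (-σ) := by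
        gcongr
        · exact div_nonneg (by positivity) (by linarith)
        · linarith
        · linarith

theorem exists_integral_radialWeight_le (hA : -1 < A) (hβ : 0 ≤ β) (hc : 0 ≤ c) (hd : 0 ≤ d)
    (hσcd : σ < c + d) (hσA : σ + A < β + c) (hσ : σ + A + 1 ≤ β + c + d)
    (hE : A + 1 < β + c + d) :
    ∃ C, 0 < C ∧ ∀ T, 0 ≤ T →
      ∫ r in Ioi 0, radialWeight A β c d T r ≤ C * (1 + T) ^ (-σ) := by
  obtain ⟨C₁, h₁⟩ := exists_setIntegral_Ioc_zero_radialWeight_le hA hβ hc hd hσcd hσ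
  obtain ⟨C₂, h₂⟩ :=
    exists_setIntegral_Ioc_radialWeight_le (A := A) (d := d) hβ hc hσA hσ
  obtain ⟨C₃, h₃⟩ := exists_setIntegral_Ioi_radialWeight_le hβ hc hd hσ hE
  refine ⟨max (C₁ + C₂ + C₃) 1, by positivity, fun T hT => ?_⟩
  by_cases hint : IntegrableOn (radialWeight A β c d T) (Ioi 0)
  · rw [setIntegral_Ioi_eq_add_add (b := (1 + T) / 2) (c := 2 * (1 + T)) (by positivity)
      (by linarith) hint]
    calc _ ≤ C₁ * (1 + T) ^ (-σ) + C₂ * (1 + T) ^ (-σ) + C₃ * (1 + T) ^ (-σ) :=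
          add_le_add_three (h₁ T hT) (h₂ T hT) (h₃ T hT)
      _ = (C₁ + C₂ + C₃) * (1 + T) ^ (-σ) := by ring
      _ ≤ max (C₁ + C₂ + C₃) 1 * (1 + T) ^ (-σ) := by gcongr; exact le_max_left _ _
  · rw [integral_undef hint]
    positivity

end

theorem stmt_18 (n : ℕ) (hn : 4 ≤ n) (a m p k ν θ : ℝ)
    (ha : a = 1 / 2 ∨ a = 1) (hm : m = ((n : ℝ) - 1) / 2 - a)
    (hp1 : ((n : ℝ) + 1) * p + 2 < ((n : ℝ) - 1) * p ^ 2)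
    (hp0 : 0 < p)
    (hp2 : p < 1 + 4 / ((n : ℝ) - 1))
    (hk1 : 2 / (p - 1) ≤ k) (hk2 : k < min ((a + m) * p - 1) (a + m + 1 / p))
    (hν : ν = k - m - a)
    (hθ : θ = min ((a + m) * (p - 1) - 1) (min ((k - m) * p - 1) (k - m - 1)))
    (hkm : m + 1 < k) :
    0 < θ ∧
    ∃ C : ℝ, 0 < C ∧ ∀ τ : ℝ, τ ≤ 0 →
      (∫ r in Set.Ioi (0:ℝ),
        r ^ (2 * a + 2 * m + 2 * p * (1 - m)) * (1 + r) ^ (-(2 * p)) *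
          (1 + |τ| + r) ^ (-(2 * a * p)) * (1 + |(|τ| - r)|) ^ (-(2 * ν * p))) ≤
        C * (1 + |τ|) ^ (-2 * θ - 2) := by
  have hn' : (3 : ℝ) ≤ n - 1 := by
    have : (4 : ℝ) ≤ n := by exact_mod_cast hn
    linarith
  have ha' : 1 / 2 ≤ a ∧ a ≤ 1 := by rcases ha with rfl | rfl <;> norm_num
  have hp : 1 < p := by
    by_contra! h
    nlinarith [mul_le_mul_of_nonneg_left h (by positivity : (0 : ℝ) ≤ (n - 1) * p)]
  have hp2' : (p - 1) * (n - 1) < 4 := (lt_div_iff₀ (by linarith)).1 (by linarith)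
  have hk1' : 2 ≤ k * (p - 1) := by rwa [div_le_iff₀ (by linarith)] at hk1
  have hnp : (n + 1 : ℝ) < (n - 1) * p := by nlinarith
  have hθ₃ : θ ≤ k - m - 1 := hθ ▸ (min_le_right _ _).trans (min_le_right _ _)
  have hθpos : 0 < θ := by
    rw [hθ, hm]
    refine lt_min (by nlinarith) (lt_min (by nlinarith) (by linarith))
  refine ⟨hθpos, ?_⟩
  obtain ⟨C, hC, hbound⟩ := exists_integral_radialWeight_le
    (A := 2 * a + 2 * m + 2 * p * (1 - m)) (β := 2 * p) (c := 2 * a * p) (d := 2 * ν * p)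
    (σ := 2 * θ + 2) (by rw [hm]; nlinarith) (by positivity) (by nlinarith)
    (by rw [hν]; nlinarith) (by rw [hν]; nlinarith) (by nlinarith [lt_min_iff.1 hk2])
    (by rw [hν]; nlinarith) (by rw [hν]; nlinarith)
  refine ⟨C, hC, fun τ _ => ?_⟩
  rw [show -2 * θ - 2 = -(2 * θ + 2) by ring]
  exact hbound |τ| (abs_nonneg τ)
end
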